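/- arXiv:2208.12050 — 7 statements merged into one kernel-verified Lean document; each statement's English description precedes it below -/
import Mathlib

section
/- Let Q be a quandle, S a subset of Q that generates Q as a quandle (i.e., the smallest subset of Q containing S and closed under the operations * and *⁻¹ is Q itself), and n ≥ 2 an integer. If x *^n s = x for all x ∈ Q and all s ∈ S, then Q is an n-quandle, i.e., x *^n y = x for all x, y ∈ Q. -/
open Quandles

/-- If `S` generates the quandle `Q` (the smallest subset containing `S` and
closed under `*` and `*⁻¹` is all of `Q`), `n ≥ 2`, and `x *ⁿ s = x` for all `x ∈ Q`, `s ∈ S`,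
then `Q` is an `n`-quandle.  (Here the paper's `x * y` is Mathlib's `y ◃ x`, so
`x *ⁿ y` is `(fun a => y ◃ a)^[n] x`.) -/
theorem stmt_0 {Q : Type*} [Quandle Q] (S : Set Q)
    (hgen : ∀ T : Set Q, S ⊆ T →
      (∀ x ∈ T, ∀ y ∈ T, y ◃ x ∈ T) → (∀ x ∈ T, ∀ y ∈ T, y ◃⁻¹ x ∈ T) →
      T = Set.univ)
    (n : ℕ) (hn : 2 ≤ n)
    (h : ∀ (x : Q), ∀ s ∈ S, (fun a => s ◃ a)^[n] x = x) :
    ∀ x y : Q, (fun a => y ◃ a)^[n] x = x := by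
  set T : Set Q := {t | (Rack.act' t : Equiv.Perm Q) ^ n = 1} with hT
  have key : ∀ t : Q, t ∈ T ↔ ∀ x : Q, (fun a => t ◃ a)^[n] x = x := by
    intro t
    have hfun : (fun a => t ◃ a) = ⇑(Rack.act' t : Equiv.Perm Q) := rfl
    constructor
    · intro ht x
      rw [hfun, Equiv.Perm.iterate_eq_pow, ht]; rfl
    · intro ht
      ext x
      have := ht x
      rw [hfun, Equiv.Perm.iterate_eq_pow] at this
      simpa using this
  have hsub : S ⊆ T := fun s hs => (key s).2 (fun x => h x s hs)
  have hconj : ∀ x y : Q, (Rack.act' (y ◃ x) : Equiv.Perm Q) =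
      Rack.act' y * Rack.act' x * (Rack.act' y)⁻¹ := fun x y => Rack.ad_conj y x
  have hact : ∀ x ∈ T, ∀ y ∈ T, y ◃ x ∈ T := by
    intro x hx y _
    show (Rack.act' (y ◃ x) : Equiv.Perm Q) ^ n = 1
    rw [hconj, conj_pow, hx]
    simp
  have hinv : ∀ x ∈ T, ∀ y ∈ T, y ◃⁻¹ x ∈ T := by
    intro x hx y _
    show (Rack.act' (y ◃⁻¹ x) : Equiv.Perm Q) ^ n = 1
    have hx' : (Rack.act' (y ◃ y ◃⁻¹ x) : Equiv.Perm Q) ^ n = 1 := by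
      rw [Rack.right_inv]; exact hx
    rw [hconj, conj_pow] at hx'
    have := congrArg (fun g => (Rack.act' y : Equiv.Perm Q)⁻¹ * g * Rack.act' y) hx'
    simpa [mul_assoc] using this
  have := hgen T hsub hact hinv
  intro x y
  exact (key y).1 (by rw [this]; trivial) x
end

section
/- Let Q be a quandle, n ≥ 2, and π : Q → Q_n a universal n-quandle quotient. Then the enveloping group Env(Q_n) is isomorphic to the quotient of Env(Q) by the normal closure of the set {e_x^n e_y e_x^{-n} e_y^{-1} : x, y ∈ Q}, via an isomorphism sending e_{π(x)} to the class of e_x for each x ∈ Q. -/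
open Quandles

universe u v

/-- `Q` is an `n`-quandle: `x *ⁿ y = x` for all `x y` (the paper's `x * y` is `y ◃ x`). -/
def IsNQuandle (Q : Type*) [Quandle Q] (n : ℕ) : Prop :=
  ∀ x y : Q, (fun a => y ◃ a)^[n] x = x

/-- `π : Q → Qn` is a universal `n`-quandle quotient. -/
def IsUniversalNQuandleQuotient {Q : Type u} {Qn : Type v} [Quandle Q] [Quandle Qn]
    (n : ℕ) (π : Q →◃ Qn) : Prop :=
  Function.Surjective π ∧ IsNQuandle Qn n ∧
    ∀ (Y : Type max u v) [Quandle Y], IsNQuandle Y n →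
      ∀ f : Q →◃ Y, ∃! g : Qn →◃ Y, ∀ x, g (π x) = f x

/-!
Let `N` be the normal closure of the relators and `G = Env(Q)/N`. The relators say that each
`[eₓ]ⁿ` commutes with every generator `[e_y]`, so it is central in `G`. The elements of a group
whose `n`-th power is central form an `n`-quandle inside the conjugation quandle, so the
universal property of `π` turns `x ↦ [eₓ]` into a homomorphism `Env(Qₙ) → G` with
`e_{π x} ↦ [eₓ]`. Conversely, in the enveloping group of an `n`-quandle
`e_aⁿ e_b e_a⁻ⁿ = e_{b *ⁿ a} = e_b`, so the map `Env(Q) → Env(Qₙ)` induced by `π` kills `N`.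
The two homomorphisms are inverse to each other because they are so on generators.
-/

lemma ShelfHom.map_iterate_act {S G : Type*} [Shelf S] [Group G] (f : S →◃ Quandle.Conj G)
    (y x : S) (k : ℕ) :
    f ((y ◃ ·)^[k] x) = f y ^ k * f x * (f y ^ k)⁻¹ := by
  induction k with
  | zero => simp
  | succ k ih =>
    rw [Function.iterate_succ_apply', f.map_act, Quandle.conj_act_eq_conj, ih, pow_succ']
    group

section PowCentralConj

variable (G : Type*) [Group G] (n : ℕ)

def PowCentralConj : Type _ := {g : G // g ^ n ∈ Subgroup.center G}

variable {G n}

lemma MulEquiv.pow_apply_mem_center {H : Type*} [Group H] (e : G ≃* H) {g : G}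
    (hg : g ^ n ∈ Subgroup.center G) : e g ^ n ∈ Subgroup.center H := by
  rw [← map_pow]
  exact MulEquivClass.apply_mem_center e hg

namespace PowCentralConj

instance : Quandle (PowCentralConj G n) where
  act x y := ⟨MulAut.conj x.1 y.1, (MulAut.conj x.1).pow_apply_mem_center y.2⟩
  invAct x y := ⟨(MulAut.conj x.1).symm y.1, (MulAut.conj x.1).symm.pow_apply_mem_center y.2⟩
  self_distrib := Subtype.ext (Shelf.self_distrib (α := Quandle.Conj G))
  left_inv x y := Subtype.ext (Rack.left_inv (α := Quandle.Conj G) x.1 y.1)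
  right_inv x y := Subtype.ext (Rack.right_inv (α := Quandle.Conj G) x.1 y.1)
  fix := Subtype.ext (Quandle.fix (α := Quandle.Conj G))

def incl : PowCentralConj G n →◃ Quandle.Conj G where
  toFun := Subtype.val
  map_act' := rfl

def codRestrict {R : Type*} [Shelf R] (f : R →◃ Quandle.Conj G)
    (hf : ∀ x, f x ^ n ∈ Subgroup.center G) : R →◃ PowCentralConj G n where
  toFun x := ⟨f x, hf x⟩
  map_act' := Subtype.ext f.map_act

lemma isNQuandle : IsNQuandle (PowCentralConj G n) n := by
  intro x y
  apply Subtype.ext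
  change incl _ = incl x
  rw [ShelfHom.map_iterate_act,
    ← Subgroup.mem_center_iff.mp (show incl y ^ n ∈ _ from y.2) (incl x)]
  group

end PowCentralConj

end PowCentralConj

namespace Rack.EnvelGroup

section

variable {R : Type*} [Rack R] {n : ℕ}

lemma closure_range_toEnvelGroup :
    Subgroup.closure (Set.range fun x : R => (toEnvelGroup R x : EnvelGroup R)) = ⊤ := by
  rw [eq_top_iff]
  rintro g -
  induction g using Quotient.inductionOn with
  | h a =>
    induction a with
    | unit => exact one_mem _
    | incl x => exact Subgroup.subset_closure ⟨x, rfl⟩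
    | mul a b iha ihb => exact mul_mem iha ihb
    | inv a iha => exact inv_mem iha

@[ext]
lemma hom_ext {G : Type*} [Group G] {F F' : EnvelGroup R →* G}
    (h : ∀ x : R, F (toEnvelGroup R x) = F' (toEnvelGroup R x)) : F = F' :=
  toEnvelGroup.map.symm.injective (DFunLike.ext _ _ h)

lemma mem_center_of_forall_commute {G : Type*} [Group G] {f : EnvelGroup R →* G}
    (hf : Function.Surjective f) {z : G}
    (hz : ∀ x : R, f (toEnvelGroup R x) * z = z * f (toEnvelGroup R x)) :
    z ∈ Subgroup.center G := by
  have hgen :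
      Subgroup.closure (f '' Set.range fun x : R => (toEnvelGroup R x : EnvelGroup R)) = ⊤ := by
    rw [← MonoidHom.map_closure, closure_range_toEnvelGroup, Subgroup.map_top_of_surjective f hf]
  rw [← Subgroup.centralizer_univ, ← Subgroup.coe_top, ← hgen, Subgroup.centralizer_closure]
  rintro _ ⟨_, ⟨x, rfl⟩, rfl⟩
  exact hz x

variable (R n) in
def powCommutatorClosure : Subgroup (EnvelGroup R) :=
  Subgroup.normalClosure
    {g : EnvelGroup R | ∃ x y : R,
      g = (toEnvelGroup R x) ^ n * toEnvelGroup R y *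
          ((toEnvelGroup R x) ^ n)⁻¹ * (toEnvelGroup R y)⁻¹}

instance : (powCommutatorClosure R n).Normal := Subgroup.normalClosure_normal

lemma powCommutatorClosure_le_ker {G : Type*} [Group G] (F : EnvelGroup R →* G)
    (hF : ∀ x, F (toEnvelGroup R x) ^ n ∈ Subgroup.center G) :
    powCommutatorClosure R n ≤ F.ker := by
  refine Subgroup.normalClosure_le_normal ?_
  rintro _ ⟨x, y, rfl⟩
  rw [SetLike.mem_coe, MonoidHom.mem_ker, ← commutatorElement_def, map_commutatorElement,
    commutatorElement_eq_one_iff_commute, map_pow]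
  exact ((Subgroup.mem_center_iff.mp (hF x)) _).symm

lemma mk_toEnvelGroup_pow_mem_center (x : R) :
    (QuotientGroup.mk (toEnvelGroup R x) : EnvelGroup R ⧸ powCommutatorClosure R n) ^ n ∈
      Subgroup.center (EnvelGroup R ⧸ powCommutatorClosure R n) := by
  refine mem_center_of_forall_commute (QuotientGroup.mk'_surjective _) fun y => ?_
  have hrel : (toEnvelGroup R x ^ n * toEnvelGroup R y * (toEnvelGroup R x ^ n)⁻¹ *
      (toEnvelGroup R y)⁻¹ : EnvelGroup R) ∈ powCommutatorClosure R n :=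
    Subgroup.subset_normalClosure ⟨x, y, rfl⟩
  rw [← commutatorElement_def, ← QuotientGroup.eq_one_iff, ← QuotientGroup.mk'_apply,
    map_commutatorElement, commutatorElement_eq_one_iff_commute] at hrel
  exact hrel.symm.eq

end

lemma pow_mem_center_of_isNQuandle {R : Type*} [Quandle R] {n : ℕ} (hR : IsNQuandle R n)
    (a : R) : (toEnvelGroup R a : EnvelGroup R) ^ n ∈ Subgroup.center (EnvelGroup R) := by
  refine mem_center_of_forall_commute (f := MonoidHom.id _) Function.surjective_id fun b => ?_
  have h := (toEnvelGroup R).map_iterate_act a b n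
  rwa [hR b a, eq_mul_inv_iff_mul_eq] at h

end Rack.EnvelGroup

open Rack in
/-- The universal property only applies to targets in `Type (max u v)`, hence the `ULift`. -/
lemma IsUniversalNQuandleQuotient.exists_envelGroup_hom {Q : Type u} {Qn : Type v} [Quandle Q]
    [Quandle Qn] {n : ℕ} {π : Q →◃ Qn} (hπ : IsUniversalNQuandleQuotient n π) {G : Type u}
    [Group G] (f : Q →◃ Quandle.Conj G) (hf : ∀ x, f x ^ n ∈ Subgroup.center G) :
    ∃ F : EnvelGroup Qn →* G, ∀ x, F (toEnvelGroup Qn (π x)) = f x := by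
  let e : G ≃* ULift.{v} G := MulEquiv.ulift.symm
  obtain ⟨g, hg, -⟩ := hπ.2.2 _ PowCentralConj.isNQuandle
    (PowCentralConj.codRestrict ((Quandle.Conj.map e.toMonoidHom).comp f)
      fun x => e.pow_apply_mem_center (hf x))
  refine ⟨e.symm.toMonoidHom.comp (toEnvelGroup.map (PowCentralConj.incl.comp g)), fun x => ?_⟩
  change e.symm (g (π x)).1 = f x
  rw [hg x]
  exact e.symm_apply_apply (f x)

open Rack EnvelGroup in
theorem stmt_3_general {Q : Type u} {Qn : Type v} [Quandle Q] [Quandle Qn]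
    {n : ℕ} (π : Q →◃ Qn) (hπ : IsUniversalNQuandleQuotient n π) :
    ∃ φ : Rack.EnvelGroup Qn ≃*
        Rack.EnvelGroup Q ⧸ Subgroup.normalClosure
          {g : Rack.EnvelGroup Q | ∃ x y : Q,
            g = (Rack.toEnvelGroup Q x) ^ n * Rack.toEnvelGroup Q y *
                ((Rack.toEnvelGroup Q x) ^ n)⁻¹ * (Rack.toEnvelGroup Q y)⁻¹},
      ∀ x : Q, φ (Rack.toEnvelGroup Qn (π x)) =
        QuotientGroup.mk (Rack.toEnvelGroup Q x) := by
  obtain ⟨Φ, hΦ⟩ := hπ.exists_envelGroup_hom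
    ((Quandle.Conj.map (QuotientGroup.mk' (powCommutatorClosure Q n))).comp (toEnvelGroup Q))
    mk_toEnvelGroup_pow_mem_center
  let Ψ₀ : EnvelGroup Q →* EnvelGroup Qn := toEnvelGroup.map ((toEnvelGroup Qn).comp π)
  let Ψ := QuotientGroup.lift _ Ψ₀ <|
    powCommutatorClosure_le_ker Ψ₀ fun x => pow_mem_center_of_isNQuandle hπ.2.1 (π x)
  refine ⟨Φ.toMulEquiv Ψ ?_ ?_, hΦ⟩
  · ext a
    obtain ⟨x, rfl⟩ := hπ.1 a
    change Ψ (Φ _) = _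
    rw [hΦ]
    rfl
  · refine QuotientGroup.monoidHom_ext _ (EnvelGroup.hom_ext fun x => ?_)
    exact hΦ x

/-- `Env(Qₙ)` is isomorphic to the quotient of `Env(Q)` by the normal closure
of `{eₓⁿ e_y eₓ⁻ⁿ e_y⁻¹ : x, y ∈ Q}`, via an isomorphism sending `e_{π x}` to the class
of `eₓ`. -/
theorem stmt_3 {Q : Type u} {Qn : Type v} [Quandle Q] [Quandle Qn]
    {n : ℕ} (hn : 2 ≤ n) (π : Q →◃ Qn) (hπ : IsUniversalNQuandleQuotient n π) :
    ∃ φ : Rack.EnvelGroup Qn ≃*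
        Rack.EnvelGroup Q ⧸ Subgroup.normalClosure
          {g : Rack.EnvelGroup Q | ∃ x y : Q,
            g = (Rack.toEnvelGroup Q x) ^ n * Rack.toEnvelGroup Q y *
                ((Rack.toEnvelGroup Q x) ^ n)⁻¹ * (Rack.toEnvelGroup Q y)⁻¹},
      ∀ x : Q, φ (Rack.toEnvelGroup Qn (π x)) =
        QuotientGroup.mk (Rack.toEnvelGroup Q x) :=
  stmt_3_general π hπ
end

section
/- Let G be a group generated by a subset S, let D = D(S^G) be the Dehn quandle of G with respect to S, let n ≥ 2, and let π : D → D_n be a universal n-quandle quotient. If D_n is finite, then the quotient group G_n := G/⟪s^n : s ∈ S⟫ is finite, where ⟪·⟫ denotes normal closure. -/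
open Quandles

universe u v

/-- The Dehn quandle of a group `G` with respect to a subset `S`: the set of all
conjugates of elements of `S`, with conjugation as the quandle operation.
(The paper's `x * y = y x y⁻¹` is Mathlib's `y ◃ x`.) -/
def DehnQuandle (G : Type*) [Group G] (S : Set G) : Type _ :=
  {x : G // ∃ s ∈ S, IsConj s x}

instance (G : Type*) [Group G] (S : Set G) : Quandle (DehnQuandle G S) where
  act x y := ⟨x.1 * y.1 * x.1⁻¹, by
    obtain ⟨s, hs, hc⟩ := y.2
    exact ⟨s, hs, hc.trans (isConj_iff.mpr ⟨x.1, rfl⟩)⟩⟩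
  self_distrib := by
    rintro ⟨x, hx⟩ ⟨y, hy⟩ ⟨z, hz⟩
    apply Subtype.ext
    show x * (y * z * y⁻¹) * x⁻¹ = (x * y * x⁻¹) * (x * z * x⁻¹) * (x * y * x⁻¹)⁻¹
    group
  invAct x y := ⟨x.1⁻¹ * y.1 * x.1, by
    obtain ⟨s, hs, hc⟩ := y.2
    exact ⟨s, hs, hc.trans (isConj_iff.mpr ⟨x.1⁻¹, by group⟩)⟩⟩
  left_inv := by
    rintro ⟨x, hx⟩ ⟨y, hy⟩
    apply Subtype.ext
    show x⁻¹ * (x * y * x⁻¹) * x = y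
    group
  right_inv := by
    rintro ⟨x, hx⟩ ⟨y, hy⟩
    apply Subtype.ext
    show x * (x⁻¹ * y * x) * x⁻¹ = y
    group
  fix := by
    rintro ⟨x, hx⟩
    apply Subtype.ext
    show x * x * x⁻¹ = x
    group

/-!
Reducing modulo `N = ⟪sⁿ : s ∈ S⟫` maps `D(S^G)` onto the Dehn quandle of the image `T` of `S`
in `Gₙ = G/N`. The latter is an `n`-quandle, since every conjugate of an element of `T` has order
dividing `n`, so by universality it is a quotient of `Dₙ` and hence finite. Thus `Gₙ` is generated
by a finite conjugation-invariant set of torsion elements, and Dietzmann's lemma applies: the centre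
is the intersection of the finitely many centralizers of these generators, each of finite index
(orbit–stabilizer), so by Schur's theorem the commutator subgroup is finite, while the
abelianization is a finitely generated torsion abelian group.
-/

section Dietzmann

open Subgroup Group
open scoped commutatorElement

variable {H : Type*} [Group H]

lemma commutatorElement_mul_mem_center (g h : H) {z w : H} (hz : z ∈ center H)
    (hw : w ∈ center H) : ⁅g * z, h * w⁆ = ⁅g, h⁆ := by
  have hzhw : z * (h * w) * z⁻¹ = h * w := by rw [← mem_center_iff.mp hz, mul_inv_cancel_right]
  have hwg : w * g⁻¹ * w⁻¹ = g⁻¹ := by rw [← mem_center_iff.mp hw, mul_inv_cancel_right]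
  calc ⁅g * z, h * w⁆ = g * (z * (h * w) * z⁻¹) * g⁻¹ * (h * w)⁻¹ := by group
    _ = g * h * (w * g⁻¹ * w⁻¹) * h⁻¹ := by rw [hzhw]; group
    _ = ⁅g, h⁆ := by rw [hwg, commutatorElement_def]

lemma finite_commutatorSet_of_finiteIndex_center [(center H).FiniteIndex] :
    Finite (commutatorSet H) := by
  refine Set.finite_coe_iff.mpr ((Set.finite_range
    fun p : (H ⧸ center H) × (H ⧸ center H) => ⁅p.1.out, p.2.out⁆).subset ?_)
  rintro _ ⟨g, h, rfl⟩
  obtain ⟨z, hz⟩ := QuotientGroup.mk_out_eq_mul (center H) g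
  obtain ⟨w, hw⟩ := QuotientGroup.mk_out_eq_mul (center H) h
  exact ⟨(g, h), by simp only [hz, hw, commutatorElement_mul_mem_center _ _ z.2 w.2]⟩

lemma finiteIndex_centralizer_of_finite_conjugatesOf {g : H} (hg : (conjugatesOf g).Finite) :
    (centralizer {g}).FiniteIndex := by
  have horbit : MulAction.orbit (ConjAct H) g = conjugatesOf g := by
    ext x
    exact ConjAct.mem_orbit_conjAct.trans ⟨IsConj.symm, IsConj.symm⟩
  have : Finite (MulAction.orbit (ConjAct H) g) := horbit ▸ hg.to_subtype
  have : Finite (H ⧸ centralizer {g}) := Finite.of_equiv _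
    ((MulAction.orbitEquivQuotientStabilizer (ConjAct H) g).trans
      (quotientEquivOfEq (ConjAct.stabilizer_eq_centralizer g)))
  exact finiteIndex_of_finite_quotient

theorem Group.finite_of_closure_eq_top_of_finite_conjugatesOfSet {T : Set H}
    (hT : closure T = ⊤) (hconj : (conjugatesOfSet T).Finite) (htor : ∀ t ∈ T, IsOfFinOrder t) :
    Finite H := by
  have hTfin : T.Finite := hconj.subset subset_conjugatesOfSet
  have : (center H).FiniteIndex := by
    have : Finite T := hTfin.to_subtype
    rw [center_eq_infi' hT]
    exact finiteIndex_iInf fun t => finiteIndex_centralizer_of_finite_conjugatesOf <|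
      hconj.subset fun x hx => mem_conjugatesOfSet_iff.mpr ⟨t, t.2, hx⟩
  have : Finite (commutatorSet H) := finite_commutatorSet_of_finiteIndex_center
  have habT : closure (Abelianization.of '' T) = ⊤ := by
    rw [← MonoidHom.map_closure, hT]
    exact map_top_of_surjective _ (QuotientGroup.mk'_surjective _)
  have : Group.FG (Abelianization H) := Group.fg_iff.mpr ⟨_, habT, hTfin.image _⟩
  have : Finite (Abelianization H) := CommGroup.finite_of_fg_isMulTorsion _ <| by
    rw [← CommGroup.torsion_eq_top_iff, eq_top_iff, ← habT, closure_le]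
    rintro _ ⟨t, ht, rfl⟩
    exact Abelianization.of.isOfFinOrder (htor t ht)
  have : Finite (H ⧸ _root_.commutator H) := ‹Finite (Abelianization H)›
  exact (finite_iff_finite_and_finiteIndex (H := _root_.commutator H)).mpr
    ⟨inferInstance, finiteIndex_of_finite_quotient⟩

end Dietzmann

instance {Q : Type u} [Quandle Q] : Quandle (ULift.{v} Q) where
  act x y := ⟨x.down ◃ y.down⟩
  self_distrib := congrArg ULift.up Shelf.self_distrib
  invAct x y := ⟨x.down ◃⁻¹ y.down⟩
  left_inv x y := congrArg ULift.up (Rack.left_inv x.down y.down)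
  right_inv x y := congrArg ULift.up (Rack.right_inv x.down y.down)
  fix := congrArg ULift.up Quandle.fix

def ULift.upShelfHom (Q : Type u) [Quandle Q] : Q →◃ ULift.{v} Q where
  toFun := ULift.up
  map_act' := rfl

lemma IsNQuandle.of_surjective {Q Y : Type*} [Quandle Q] [Quandle Y] {n : ℕ}
    (hQ : IsNQuandle Q n) (f : Q →◃ Y) (hf : Function.Surjective f) : IsNQuandle Y n := by
  intro x y
  obtain ⟨x, rfl⟩ := hf x
  obtain ⟨y, rfl⟩ := hf y
  have : Function.Semiconj f (fun a => y ◃ a) (fun a => f y ◃ a) := fun _ => f.map_act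
  rw [← this.iterate_right n x, hQ]

lemma IsUniversalNQuandleQuotient.finite_of_surjective {Q : Type u} {Qn : Type v} [Quandle Q]
    [Quandle Qn] {n : ℕ} {π : Q →◃ Qn} (hπ : IsUniversalNQuandleQuotient n π) [Finite Qn]
    {Y : Type u} [Quandle Y] (hY : IsNQuandle Y n) (f : Q →◃ Y) (hf : Function.Surjective f) :
    Finite Y := by
  -- The universal property only quantifies over quandles in `Type (max u v)`.
  obtain ⟨-, -, huniv⟩ := hπ
  obtain ⟨g, hg, -⟩ :=
    huniv _ (hY.of_surjective (ULift.upShelfHom.{u, v} Y) ULift.up_surjective)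
      ((ULift.upShelfHom Y).comp f)
  refine Finite.of_surjective (fun x => (g x).down) fun y => ?_
  obtain ⟨x, rfl⟩ := hf y
  exact ⟨π x, congrArg ULift.down (hg x)⟩

namespace DehnQuandle

variable {G H : Type*} [Group G] [Group H]

lemma act_val {S : Set G} (x y : DehnQuandle G S) : (x ◃ y).1 = x.1 * y.1 * x.1⁻¹ := rfl

lemma iterate_act_val {S : Set G} (x y : DehnQuandle G S) (m : ℕ) :
    ((fun a => y ◃ a)^[m] x).1 = y.1 ^ m * x.1 * (y.1 ^ m)⁻¹ := by
  induction m with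
  | zero => simp
  | succ k ih =>
    rw [Function.iterate_succ_apply']
    change y.1 * ((fun a => y ◃ a)^[k] x).1 * y.1⁻¹ = _
    rw [ih, pow_succ']
    group

lemma isNQuandle {S : Set G} {n : ℕ} (hS : ∀ s ∈ S, s ^ n = 1) :
    IsNQuandle (DehnQuandle G S) n := by
  intro x y
  obtain ⟨s, hs, hsy⟩ := y.2
  have hy : y.1 ^ n = 1 := by simpa [hS s hs] using (hsy.pow n).symm
  exact Subtype.ext <| by rw [iterate_act_val, hy]; group

def map (f : G →* H) (S : Set G) : DehnQuandle G S →◃ DehnQuandle H (f '' S) where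
  toFun x := ⟨f x.1, by
    obtain ⟨s, hs, hsx⟩ := x.2
    exact ⟨f s, Set.mem_image_of_mem f hs, f.map_isConj hsx⟩⟩
  map_act' := Subtype.ext <| by simp only [act_val, map_mul, map_inv]; rfl

lemma map_surjective {f : G →* H} (hf : Function.Surjective f) (S : Set G) :
    Function.Surjective (map f S) := by
  rintro ⟨y, _, ⟨s, hs, rfl⟩, hsy⟩
  obtain ⟨c, rfl⟩ := isConj_iff.mp hsy
  obtain ⟨c, rfl⟩ := hf c
  exact ⟨⟨c * s * c⁻¹, s, hs, isConj_iff.mpr ⟨c, rfl⟩⟩, Subtype.ext <| by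
    change f (c * s * c⁻¹) = _
    simp⟩

def equivConjugatesOfSet (S : Set G) : DehnQuandle G S ≃ Group.conjugatesOfSet S :=
  Equiv.subtypeEquivRight fun _ => Group.mem_conjugatesOfSet_iff.symm

end DehnQuandle

/-- if a universal `n`-quandle quotient `Dₙ` of the Dehn quandle `D(S^G)`
is finite, then `Gₙ = G/⟪sⁿ : s ∈ S⟫` is finite. -/
theorem stmt_5 {G : Type u} [Group G] (S : Set G) (hS : Subgroup.closure S = ⊤)
    {n : ℕ} (hn : 2 ≤ n) {Dn : Type v} [Quandle Dn]
    (π : DehnQuandle G S →◃ Dn) (hπ : IsUniversalNQuandleQuotient n π)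
    (hfin : Finite Dn) :
    Finite (G ⧸ Subgroup.normalClosure {g : G | ∃ s ∈ S, g = s ^ n}) := by
  set N := Subgroup.normalClosure {g : G | ∃ s ∈ S, g = s ^ n}
  set φ := QuotientGroup.mk' N
  have hpow : ∀ t ∈ φ '' S, t ^ n = 1 := by
    rintro _ ⟨s, hs, rfl⟩
    rw [← map_pow, QuotientGroup.mk'_apply, QuotientGroup.eq_one_iff]
    exact Subgroup.subset_normalClosure ⟨s, hs, rfl⟩
  have : Finite (DehnQuandle (G ⧸ N) (φ '' S)) :=
    hπ.finite_of_surjective (DehnQuandle.isNQuandle hpow) _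
      (DehnQuandle.map_surjective (QuotientGroup.mk'_surjective N) S)
  refine Group.finite_of_closure_eq_top_of_finite_conjugatesOfSet ?_
    (Set.finite_coe_iff.mp (.of_equiv _ (DehnQuandle.equivConjugatesOfSet _)))
    fun t ht => isOfFinOrder_iff_pow_eq_one.mpr ⟨n, by omega, hpow t ht⟩
  rw [← MonoidHom.map_closure, hS,
    Subgroup.map_top_of_surjective _ (QuotientGroup.mk'_surjective N)]
end

section
/- Let M = (m_{ij}) be a Coxeter matrix on {1,…,k}, A the associated Artin group with standard generators 𝐬_1,…,𝐬_k, and (W, S) the associated Coxeter system with simple reflections S = {s_1,…,s_k}. Then the enveloping group Env(D(S^W)) of the Coxeter quandle is isomorphic to A/N, where N is the normal closure in A of the set {𝐬_i² 𝐬_j 𝐬_i^{-2} 𝐬_j^{-1} : 1 ≤ i, j ≤ k}. -/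
/-!
In the enveloping group of a quandle, the braid relation of length `m` between `e_a` and `e_b`
amounts to the quandle identity `a ◃ (b ◃ (a ◃ ⋯)) = b` with `m` letters, which holds
in `D(S^W)` because the braid relations hold in `W`; and `e_s²` commutes with `e_t` because
`s ◃ (s ◃ t) = t`. So `𝐬ᵢ ↦ e_{sᵢ}` defines `ψ : A/N → Env(D(S^W))`. It is onto, since
`e_{w sᵢ w⁻¹} = ψ(g 𝐬ᵢ g⁻¹)` for any lift `g` of `w`.

For injectivity: `ψ g = 1` forces `g` into the kernel of `A/N → W`, which is generated by the
central squares `𝐬ᵢ²`. These only depend on the class of `i` for the equivalence generated by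
`m_ij` odd, and conjugate simple reflections lie in the same class (a sign character of `W`
separates the classes). Counting the generators `e_x` of `Env` by the class of `x` sends
`∏ (𝐬_c²)^{n_c}` to `(2 n_c)_c`, so `g = 1`.
-/

open Quandles

/-- The alternating word `(s_i s_j)_m = s_i s_j s_i ⋯` of length `m` in the free group. -/
def altWord {B : Type*} (i j : B) : ℕ → FreeGroup B
  | 0 => 1
  | m + 1 => FreeGroup.of i * altWord j i m

/-- The Artin relations of a Coxeter matrix `M`: for each pair `i j` with `M i j ≠ 0`
(`0` encodes `∞`), the relation `(s_i s_j)_{M i j} = (s_j s_i)_{M i j}`. -/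
def artinRels {B : Type*} (M : CoxeterMatrix B) : Set (FreeGroup B) :=
  {r | ∃ i j : B, M i j ≠ 0 ∧ r = altWord i j (M i j) * (altWord j i (M i j))⁻¹}

/-- The Artin group of the Coxeter matrix `M`. -/
abbrev ArtinGroup {B : Type*} (M : CoxeterMatrix B) := PresentedGroup (artinRels M)

/-- The Coxeter group of the Coxeter matrix `M`, as the quotient of the Artin group by
the additional relations `s_i² = 1`. -/
abbrev CoxGroup {B : Type*} (M : CoxeterMatrix B) :=
  PresentedGroup (artinRels M ∪ {r : FreeGroup B | ∃ i : B, r = FreeGroup.of i ^ 2})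

section AltProd

variable {G H : Type*}

def altProd [Monoid G] (x y : G) : ℕ → G
  | 0 => 1
  | m + 1 => x * altProd y x m

section Monoid

variable [Monoid G]

@[simp] lemma altProd_zero (x y : G) : altProd x y 0 = 1 := rfl

lemma altProd_succ (x y : G) (m : ℕ) : altProd x y (m + 1) = x * altProd y x m := rfl

lemma altProd_two_mul (x y : G) (c : ℕ) : altProd x y (2 * c) = (x * y) ^ c := by
  induction c with
  | zero => simp
  | succ c ih => rw [Nat.mul_succ, altProd_succ, altProd_succ, ih, pow_succ', mul_assoc]

lemma altProd_two_mul_add_one (x y : G) (c : ℕ) :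
    altProd x y (2 * c + 1) = (x * y) ^ c * x := by
  induction c with
  | zero => simp [altProd_succ]
  | succ c ih => rw [Nat.mul_succ, altProd_succ, altProd_succ, ih, pow_succ', mul_assoc, mul_assoc]

lemma map_altProd [Monoid H] (φ : G →* H) (x y : G) (m : ℕ) :
    φ (altProd x y m) = altProd (φ x) (φ y) m := by
  induction m generalizing x y with
  | zero => simp
  | succ m ih => rw [altProd_succ, altProd_succ, map_mul, ih]

end Monoid

lemma altProd_comm_of_even [CommMonoid G] (x y : G) {m : ℕ} (hm : Even m) :
    altProd x y m = altProd y x m := by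
  obtain ⟨c, rfl⟩ := hm
  rw [← two_mul, altProd_two_mul, altProd_two_mul, mul_comm]

lemma altWord_eq_altProd {B : Type*} (i j : B) (m : ℕ) :
    altWord i j m = altProd (FreeGroup.of i) (FreeGroup.of j) m := by
  induction m generalizing i j with
  | zero => rfl
  | succ m ih => rw [altWord, altProd_succ, ih]

lemma FreeGroup.lift_altWord {B : Type*} [Group G] (f : B → G) (i j : B) (m : ℕ) :
    FreeGroup.lift f (altWord i j m) = altProd (f i) (f j) m := by
  rw [altWord_eq_altProd, map_altProd, FreeGroup.lift_apply_of, FreeGroup.lift_apply_of]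

end AltProd

section Presentations

variable {B G : Type*} [Group G] {M : CoxeterMatrix B}

lemma PresentedGroup.altProd_of_eq_of_artinRels_subset {rels : Set (FreeGroup B)}
    (h : artinRels M ⊆ rels) {i j : B} (hij : M i j ≠ 0) :
    altProd (of i : PresentedGroup rels) (of j) (M i j) = altProd (of j) (of i) (M i j) := by
  have hr := PresentedGroup.one_of_mem (h ⟨i, j, hij, rfl⟩)
  rwa [map_mul, map_inv, mul_inv_eq_one, altWord_eq_altProd, altWord_eq_altProd, map_altProd,
    map_altProd] at hr

namespace ArtinGroup

lemma altProd_of_eq {i j : B} (hij : M i j ≠ 0) :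
    altProd (PresentedGroup.of i : ArtinGroup M) (PresentedGroup.of j) (M i j) =
      altProd (PresentedGroup.of j) (PresentedGroup.of i) (M i j) :=
  PresentedGroup.altProd_of_eq_of_artinRels_subset subset_rfl hij

def lift (f : B → G)
    (hf : ∀ i j, M i j ≠ 0 → altProd (f i) (f j) (M i j) = altProd (f j) (f i) (M i j)) :
    ArtinGroup M →* G :=
  PresentedGroup.toGroup (f := f) <| by
    rintro _ ⟨i, j, hij, rfl⟩
    rw [map_mul, map_inv, FreeGroup.lift_altWord, FreeGroup.lift_altWord, hf i j hij,
      mul_inv_cancel]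

@[simp] lemma lift_of (f : B → G)
    (hf : ∀ i j, M i j ≠ 0 → altProd (f i) (f j) (M i j) = altProd (f j) (f i) (M i j))
    (i : B) : lift f hf (PresentedGroup.of i) = f i :=
  PresentedGroup.toGroup.of _

end ArtinGroup

namespace CoxGroup

lemma altProd_of_eq {i j : B} (hij : M i j ≠ 0) :
    altProd (PresentedGroup.of i : CoxGroup M) (PresentedGroup.of j) (M i j) =
      altProd (PresentedGroup.of j) (PresentedGroup.of i) (M i j) :=
  PresentedGroup.altProd_of_eq_of_artinRels_subset Set.subset_union_left hij

lemma of_sq (i : B) : (PresentedGroup.of i : CoxGroup M) ^ 2 = 1 := by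
  rw [← PresentedGroup.one_of_mem (Or.inr ⟨i, rfl⟩), map_pow]
  rfl

def lift (f : B → G)
    (hf : ∀ i j, M i j ≠ 0 → altProd (f i) (f j) (M i j) = altProd (f j) (f i) (M i j))
    (hsq : ∀ i, f i ^ 2 = 1) : CoxGroup M →* G :=
  PresentedGroup.toGroup (f := f) <| by
    rintro _ (⟨i, j, hij, rfl⟩ | ⟨i, rfl⟩)
    · rw [map_mul, map_inv, FreeGroup.lift_altWord, FreeGroup.lift_altWord, hf i j hij,
        mul_inv_cancel]
    · rw [map_pow, FreeGroup.lift_apply_of, hsq]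

@[simp] lemma lift_of (f : B → G)
    (hf : ∀ i j, M i j ≠ 0 → altProd (f i) (f j) (M i j) = altProd (f j) (f i) (M i j))
    (hsq : ∀ i, f i ^ 2 = 1) (i : B) : lift f hf hsq (PresentedGroup.of i) = f i :=
  PresentedGroup.toGroup.of _

end CoxGroup

end Presentations

section Quandles

variable {Q G H : Type*} [Quandle Q] [Group G] [Group H]

lemma Quandle.map_act_eq_conj (f : Q →◃ Quandle.Conj H) (x y : Q) :
    f (x ◃ y) = f x * f y * (f x)⁻¹ := by
  rw [f.map_act, Quandle.conj_act_eq_conj]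

def Quandle.ladder (a b : Q) : ℕ → Q
  | 0 => b
  | m + 1 => a ◃ ladder b a m

lemma Quandle.map_ladder_succ (f : Q →◃ Quandle.Conj H) (a b : Q) (m : ℕ) :
    f (ladder a b (m + 1)) = altProd (f a) (f b) (m + 1) * (altProd (f a) (f b) m)⁻¹ := by
  induction m generalizing a b with
  | zero => simp [ladder, altProd_succ, Quandle.fix]
  | succ m ih =>
    rw [ladder, map_act_eq_conj, ih, altProd_succ (f a) _ (m + 1), altProd_succ (f a) _ m]
    group

lemma Quandle.altProd_map_eq_iff (f : Q →◃ Quandle.Conj H) (a b : Q) (m : ℕ) :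
    altProd (f a) (f b) (m + 1) = altProd (f b) (f a) (m + 1) ↔
      f (ladder a b (m + 1)) = f b := by
  rw [map_ladder_succ, mul_inv_eq_iff_eq_mul, altProd_succ (f b)]

lemma Rack.EnvelGroup.closure_range_toEnvelGroup_s9 (R : Type*) [Rack R] :
    Subgroup.closure (Set.range (Rack.toEnvelGroup R)) = ⊤ := by
  refine eq_top_iff.mpr fun g _ => Quotient.inductionOn g fun a => ?_
  induction a with
  | unit => exact one_mem _
  | incl x => exact Subgroup.subset_closure ⟨x, rfl⟩
  | mul a b ha hb => exact mul_mem ha hb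
  | inv a ha => exact inv_mem ha

namespace DehnQuandle

variable {S : Set G}

instance : MulAction G (DehnQuandle G S) where
  smul g x := ⟨g * x.1 * g⁻¹, by
    obtain ⟨s, hs, hc⟩ := x.2
    exact ⟨s, hs, hc.trans (isConj_iff.mpr ⟨g, rfl⟩)⟩⟩
  one_smul x := Subtype.ext (by show 1 * x.1 * 1⁻¹ = x.1; group)
  mul_smul g h x := Subtype.ext <| by
    show g * h * x.1 * (g * h)⁻¹ = g * (h * x.1 * h⁻¹) * g⁻¹
    group

lemma smul_val (g : G) (x : DehnQuandle G S) : (g • x).1 = g * x.1 * g⁻¹ := rfl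

lemma act_eq_smul (x y : DehnQuandle G S) : x ◃ y = x.1 • y := rfl

def incl : DehnQuandle G S →◃ Quandle.Conj G where
  toFun := Subtype.val
  map_act' := rfl

lemma incl_injective : Function.Injective (incl : DehnQuandle G S → G) := Subtype.val_injective

lemma altProd_map_eq (f : DehnQuandle G S →◃ Quandle.Conj H) {x y : DehnQuandle G S} {n : ℕ}
    (hn : n ≠ 0) (h : altProd x.1 y.1 n = altProd y.1 x.1 n) :
    altProd (f x) (f y) n = altProd (f y) (f x) n := by
  obtain ⟨m, rfl⟩ := Nat.exists_eq_succ_of_ne_zero hn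
  rw [Quandle.altProd_map_eq_iff, incl_injective ((Quandle.altProd_map_eq_iff incl x y m).mp h)]

def envelToGroup : Rack.EnvelGroup (DehnQuandle G S) →* G := Rack.toEnvelGroup.map incl

lemma commute_sq_map (f : DehnQuandle G S →◃ Quandle.Conj H) {x y : DehnQuandle G S}
    (h : Commute (x.1 ^ 2) y.1) : Commute (f x ^ 2) (f y) := by
  have hxy : x ◃ (x ◃ y) = y := Subtype.ext <| by
    rw [act_eq_smul, act_eq_smul, ← mul_smul, smul_val, ← sq, h.eq, mul_inv_cancel_right]
  have hf := congrArg f hxy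
  rw [Quandle.map_act_eq_conj, Quandle.map_act_eq_conj] at hf
  rw [commute_iff_eq]
  conv_rhs => rw [← hf]
  rw [sq]
  group

end DehnQuandle

end Quandles

namespace ArtinGroup

variable {B G : Type*} [Group G] (M : CoxeterMatrix B)

def sqCommRels : Set (ArtinGroup M) :=
  {g | ∃ i j : B, g = PresentedGroup.of i ^ 2 * PresentedGroup.of j *
    (PresentedGroup.of i ^ 2)⁻¹ * (PresentedGroup.of j)⁻¹}

abbrev CentralSq := ArtinGroup M ⧸ Subgroup.normalClosure (sqCommRels M)

namespace CentralSq

variable {M}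

def of (i : B) : CentralSq M := QuotientGroup.mk (PresentedGroup.of i)

lemma closure_range_of : Subgroup.closure (Set.range (of : B → CentralSq M)) = ⊤ := by
  refine eq_top_iff.mpr fun g _ => QuotientGroup.induction_on g fun a => ?_
  exact PresentedGroup.generated_by _ ((Subgroup.closure _).comap (QuotientGroup.mk' _))
    (fun i => Subgroup.subset_closure (Set.mem_range_self (f := of) i)) a

lemma hom_ext {φ₁ φ₂ : CentralSq M →* G} (h : ∀ i, φ₁ (of i) = φ₂ (of i)) : φ₁ = φ₂ :=
  QuotientGroup.monoidHom_ext _ (PresentedGroup.ext h)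

lemma altProd_of_eq {i j : B} (hij : M i j ≠ 0) :
    altProd (of i : CentralSq M) (of j) (M i j) = altProd (of j) (of i) (M i j) := by
  simp only [of, ← QuotientGroup.mk'_apply, ← map_altProd, ArtinGroup.altProd_of_eq hij]

lemma commute_of_sq (i j : B) : Commute (of i ^ 2 : CentralSq M) (of j) := by
  have h := (QuotientGroup.eq_one_iff _).mpr (Subgroup.subset_normalClosure
    (show _ ∈ sqCommRels M from ⟨i, j, rfl⟩))
  rwa [QuotientGroup.mk_mul, QuotientGroup.mk_mul, QuotientGroup.mk_mul, QuotientGroup.mk_inv,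
    QuotientGroup.mk_inv, QuotientGroup.mk_pow, mul_inv_eq_one, mul_inv_eq_iff_eq_mul] at h

lemma of_sq_mem_center (i : B) : of i ^ 2 ∈ Subgroup.center (CentralSq M) := by
  have h : Subgroup.closure (Set.range of) ≤ Subgroup.centralizer {(of i : CentralSq M) ^ 2} :=
    (Subgroup.closure_le _).mpr <| by
      rintro _ ⟨j, rfl⟩ _ rfl
      exact (commute_of_sq i j).eq
  rwa [closure_range_of, top_le_iff, Subgroup.centralizer_eq_top_iff_subset,
    Set.singleton_subset_iff] at h

def lift (f : B → G)
    (hf : ∀ i j, M i j ≠ 0 → altProd (f i) (f j) (M i j) = altProd (f j) (f i) (M i j))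
    (hsq : ∀ i j, Commute (f i ^ 2) (f j)) : CentralSq M →* G :=
  QuotientGroup.lift _ (ArtinGroup.lift f hf) <| Subgroup.normalClosure_le_normal <| by
    rintro _ ⟨i, j, rfl⟩
    simp [(hsq i j).eq]

@[simp] lemma lift_of (f : B → G)
    (hf : ∀ i j, M i j ≠ 0 → altProd (f i) (f j) (M i j) = altProd (f j) (f i) (M i j))
    (hsq : ∀ i j, Commute (f i ^ 2) (f j)) (i : B) : lift f hf hsq (of i) = f i :=
  ArtinGroup.lift_of f hf i

end CentralSq

end ArtinGroup

abbrev CoxeterQuandle {B : Type*} (M : CoxeterMatrix B) :=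
  DehnQuandle (CoxGroup M) (Set.range PresentedGroup.of)

namespace CoxeterQuandle

variable {B : Type*} {M : CoxeterMatrix B}

def simpleRefl (i : B) : CoxeterQuandle M :=
  ⟨PresentedGroup.of i, PresentedGroup.of i, ⟨i, rfl⟩, IsConj.refl _⟩

lemma exists_isConj_simpleRefl (x : CoxeterQuandle M) : ∃ i, IsConj (simpleRefl i).1 x.1 := by
  obtain ⟨_, ⟨i, rfl⟩, h⟩ := x.2
  exact ⟨i, h⟩

end CoxeterQuandle

namespace ArtinGroup.CentralSq

open CoxeterQuandle

variable {B : Type*} (M : CoxeterMatrix B)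

noncomputable def toEnvelGroup : CentralSq M →* Rack.EnvelGroup (CoxeterQuandle M) :=
  lift (fun i => Rack.toEnvelGroup _ (simpleRefl i))
    (fun _ _ hij => DehnQuandle.altProd_map_eq _ hij (CoxGroup.altProd_of_eq hij))
    (fun i _ => DehnQuandle.commute_sq_map _ <| by
      simp only [simpleRefl, CoxGroup.of_sq, Commute.one_left])

lemma toEnvelGroup_of (i : B) :
    toEnvelGroup M (of i) = Rack.toEnvelGroup _ (simpleRefl i) :=
  lift_of _ _ _ i

def toCoxGroup : CentralSq M →* CoxGroup M :=
  lift PresentedGroup.of (fun _ _ => CoxGroup.altProd_of_eq)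
    (fun i _ => by simp only [CoxGroup.of_sq, Commute.one_left])

lemma toCoxGroup_of (i : B) : toCoxGroup M (of i) = PresentedGroup.of i :=
  lift_of _ _ _ i

lemma envelToGroup_comp_toEnvelGroup :
    DehnQuandle.envelToGroup.comp (toEnvelGroup M) = toCoxGroup M :=
  hom_ext fun i => by
    rw [MonoidHom.comp_apply, toEnvelGroup_of, toCoxGroup_of]
    rfl

lemma toCoxGroup_surjective : Function.Surjective (toCoxGroup M) := by
  rw [← MonoidHom.range_eq_top, eq_top_iff, ← PresentedGroup.closure_range_of,
    Subgroup.closure_le]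
  rintro _ ⟨i, rfl⟩
  exact ⟨of i, toCoxGroup_of M i⟩

lemma toEnvelGroup_conj (g : CentralSq M) (x : CoxeterQuandle M) :
    toEnvelGroup M g * Rack.toEnvelGroup _ x * (toEnvelGroup M g)⁻¹ =
      Rack.toEnvelGroup _ (toCoxGroup M g • x) := by
  have hg : g ∈ Subgroup.closure (Set.range of) := by
    rw [closure_range_of]; trivial
  induction hg using Subgroup.closure_induction generalizing x with
  | mem _ h =>
    obtain ⟨i, rfl⟩ := h
    rw [toEnvelGroup_of, toCoxGroup_of]
    exact (Quandle.map_act_eq_conj _ (simpleRefl i) x).symm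
  | one => simp
  | mul a b _ _ ha hb =>
    rw [map_mul, map_mul, mul_smul, ← ha, ← hb]
    group
  | inv a _ ha =>
    have h := ha ((toCoxGroup M a)⁻¹ • x)
    rw [smul_inv_smul] at h
    rw [map_inv, map_inv, ← h]
    group

lemma toEnvelGroup_surjective : Function.Surjective (toEnvelGroup M) := by
  rw [← MonoidHom.range_eq_top, eq_top_iff, ← Rack.EnvelGroup.closure_range_toEnvelGroup_s9,
    Subgroup.closure_le]
  rintro _ ⟨x, rfl⟩
  obtain ⟨i, hi⟩ := exists_isConj_simpleRefl x
  obtain ⟨w, hw⟩ := isConj_iff.mp hi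
  obtain ⟨g, rfl⟩ := toCoxGroup_surjective M w
  refine ⟨g * of i * g⁻¹, ?_⟩
  rw [map_mul, map_mul, map_inv, toEnvelGroup_of, toEnvelGroup_conj]
  exact congrArg _ (Subtype.ext hw)

end ArtinGroup.CentralSq

lemma Subgroup.normal_of_le_center {G : Type*} [Group G] {N : Subgroup G}
    (h : N ≤ Subgroup.center G) : N.Normal :=
  ⟨fun n hn g => by rwa [Subgroup.mem_center_iff.mp (h hn) g, mul_inv_cancel_right]⟩

def CoxeterMatrix.oddSetoid {B : Type*} (M : CoxeterMatrix B) : Setoid B :=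
  Relation.EqvGen.setoid fun i j => Odd (M i j)

abbrev CoxeterMatrix.OddClass {B : Type*} (M : CoxeterMatrix B) := Quotient M.oddSetoid

lemma CoxGroup.oddClass_eq_of_isConj {B : Type*} {M : CoxeterMatrix B} {i j : B}
    (h : IsConj (PresentedGroup.of i : CoxGroup M) (PresentedGroup.of j)) :
    (⟦i⟧ : M.OddClass) = ⟦j⟧ := by
  classical
  let sign : CoxGroup M →* ℤˣ :=
    lift (fun a => if (⟦a⟧ : M.OddClass) = ⟦i⟧ then -1 else 1)
      (fun a b _ => (Nat.even_or_odd (M a b)).elim (altProd_comm_of_even _ _) fun ho => by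
        rw [Quotient.sound (Relation.EqvGen.rel _ _ ho)])
      (fun _ => Int.units_sq _)
  have hsign := isConj_iff_eq.mp (sign.map_isConj h)
  simp only [sign, lift_of, if_true] at hsign
  by_contra hne
  rw [if_neg (Ne.symm hne)] at hsign
  exact absurd hsign (by decide)

namespace CoxeterQuandle

variable {B : Type*} {M : CoxeterMatrix B}

noncomputable def oddClass (x : CoxeterQuandle M) : M.OddClass :=
  ⟦(exists_isConj_simpleRefl x).choose⟧

lemma oddClass_eq {x : CoxeterQuandle M} {i : B} (h : IsConj (simpleRefl i).1 x.1) :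
    oddClass x = ⟦i⟧ :=
  CoxGroup.oddClass_eq_of_isConj ((exists_isConj_simpleRefl x).choose_spec.trans h.symm)

lemma oddClass_smul (w : CoxGroup M) (x : CoxeterQuandle M) : oddClass (w • x) = oddClass x := by
  obtain ⟨i, hi⟩ := exists_isConj_simpleRefl x
  rw [oddClass_eq hi, oddClass_eq (hi.trans (isConj_iff.mpr ⟨w, rfl⟩))]

variable (M)

noncomputable def oddClassCount :
    Rack.EnvelGroup (CoxeterQuandle M) →* Multiplicative (M.OddClass →₀ ℤ) :=
  Rack.toEnvelGroup.map
    { toFun := fun x => Multiplicative.ofAdd (Finsupp.single (oddClass x) 1)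
      map_act' := fun {x y} => by
        rw [DehnQuandle.act_eq_smul, oddClass_smul, Quandle.conj_act_eq_conj,
          mul_inv_cancel_comm] }

lemma oddClassCount_simpleRefl (i : B) :
    oddClassCount M (Rack.toEnvelGroup _ (simpleRefl i)) =
      Multiplicative.ofAdd (Finsupp.single ⟦i⟧ 1) := by
  show Multiplicative.ofAdd (Finsupp.single (oddClass (simpleRefl i)) 1) = _
  rw [oddClass_eq (IsConj.refl _)]

end CoxeterQuandle

namespace ArtinGroup.CentralSq

open CoxeterQuandle

variable {B : Type*} {M : CoxeterMatrix B}

lemma of_sq_eq_of_odd {i j : B} (h : Odd (M i j)) : (of i : CentralSq M) ^ 2 = of j ^ 2 := by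
  obtain ⟨c, hc⟩ := h
  have hb := altProd_of_eq (M := M) (i := i) (j := j) (by omega)
  rw [hc, altProd_two_mul_add_one, altProd_succ, altProd_two_mul] at hb
  set p := (of i * of j : CentralSq M) ^ c
  have hj : of j = p * of i * p⁻¹ := by rw [hb, mul_inv_cancel_right]
  rw [hj, conj_pow, Subgroup.mem_center_iff.mp (of_sq_mem_center i) p, mul_inv_cancel_right]

lemma of_sq_eq_of_oddSetoid {i j : B} (h : M.oddSetoid i j) :
    (of i : CentralSq M) ^ 2 = of j ^ 2 := by
  induction h with
  | rel _ _ h => exact of_sq_eq_of_odd h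
  | refl => rfl
  | symm _ _ _ ih => exact ih.symm
  | trans _ _ _ _ _ ih₁ ih₂ => exact ih₁.trans ih₂

variable (M)

open scoped IsMulCommutative in
noncomputable def sqHom : Multiplicative (M.OddClass →₀ ℤ) →* CentralSq M :=
  (Subgroup.center _).subtype.comp <| AddMonoidHom.toMultiplicativeLeft <|
    Finsupp.liftAddHom (α := M.OddClass) fun c =>
      zmultiplesHom (Additive (Subgroup.center (CentralSq M)))
        (Additive.ofMul ⟨of c.out ^ 2, of_sq_mem_center _⟩)

lemma sqHom_single (c : M.OddClass) (k : ℤ) :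
    sqHom M (Multiplicative.ofAdd (Finsupp.single c k)) = (of c.out ^ 2) ^ k := by
  simp [sqHom]

lemma ker_toCoxGroup_le_range_sqHom : (toCoxGroup M).ker ≤ (sqHom M).range := by
  have : (sqHom M).range.Normal := Subgroup.normal_of_le_center <| by
    rw [sqHom, MonoidHom.range_comp]
    exact (Subgroup.map_le_range _ _).trans (Subgroup.range_subtype _).le
  have hsq (i : B) : of i ^ 2 ∈ (sqHom M).range :=
    ⟨Multiplicative.ofAdd (Finsupp.single ⟦i⟧ 1), by
      rw [sqHom_single, zpow_one]
      exact of_sq_eq_of_oddSetoid (Quotient.mk_out (s := M.oddSetoid) i)⟩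
  let toQuot : CoxGroup M →* CentralSq M ⧸ (sqHom M).range :=
    CoxGroup.lift (fun i => QuotientGroup.mk' _ (of i))
      (fun i j hij => by rw [← map_altProd, ← map_altProd, altProd_of_eq hij])
      (fun i => by
        rw [← map_pow, QuotientGroup.mk'_apply, QuotientGroup.eq_one_iff]
        exact hsq i)
  have hcomp : toQuot.comp (toCoxGroup M) = QuotientGroup.mk' _ :=
    hom_ext fun i => by rw [MonoidHom.comp_apply, toCoxGroup_of, CoxGroup.lift_of]
  intro g hg
  rw [← QuotientGroup.eq_one_iff, ← QuotientGroup.mk'_apply, ← hcomp, MonoidHom.comp_apply, hg,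
    map_one]

lemma oddClassCount_toEnvelGroup_sqHom (f : M.OddClass →₀ ℤ) :
    oddClassCount M (toEnvelGroup M (sqHom M (Multiplicative.ofAdd f))) =
      Multiplicative.ofAdd f ^ 2 := by
  induction f using Finsupp.induction_linear with
  | zero => rw [ofAdd_zero, map_one, map_one, map_one, one_pow]
  | add f g hf hg => rw [ofAdd_add, map_mul, map_mul, map_mul, hf, hg, mul_pow]
  | single c k =>
    rw [sqHom_single, map_zpow, map_pow, map_zpow, map_pow, toEnvelGroup_of,
      oddClassCount_simpleRefl, Quotient.out_eq, ← Finsupp.smul_single_one c k, ofAdd_zsmul,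
      ← zpow_natCast, ← zpow_natCast, ← zpow_mul, ← zpow_mul, mul_comm]

lemma toEnvelGroup_injective : Function.Injective (toEnvelGroup M) := by
  refine (injective_iff_map_eq_one _).mpr fun g hg => ?_
  obtain ⟨n, rfl⟩ := ker_toCoxGroup_le_range_sqHom M <| by
    rw [MonoidHom.mem_ker, ← envelToGroup_comp_toEnvelGroup, MonoidHom.comp_apply, hg, map_one]
  have hn : n ^ 2 = 1 := by
    rw [← ofAdd_toAdd n, ← oddClassCount_toEnvelGroup_sqHom, ofAdd_toAdd, hg, map_one]
  rw [sq_eq_one.mp hn, map_one]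

end ArtinGroup.CentralSq

theorem stmt_9_general {k : ℕ} (M : CoxeterMatrix (Fin k)) :
    Nonempty
      (Rack.EnvelGroup (DehnQuandle (CoxGroup M)
          (Set.range (PresentedGroup.of : Fin k → CoxGroup M))) ≃*
        ArtinGroup M ⧸ Subgroup.normalClosure
          {g : ArtinGroup M | ∃ i j : Fin k,
            g = PresentedGroup.of i ^ 2 * PresentedGroup.of j *
                (PresentedGroup.of i ^ 2)⁻¹ * (PresentedGroup.of j)⁻¹}) :=
  ⟨(MulEquiv.ofBijective (ArtinGroup.CentralSq.toEnvelGroup M)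
    ⟨ArtinGroup.CentralSq.toEnvelGroup_injective M,
      ArtinGroup.CentralSq.toEnvelGroup_surjective M⟩).symm⟩

/-- the enveloping group of the Coxeter quandle `D(S^W)` is isomorphic to
`A/N`, where `A` is the Artin group and `N` is the normal closure of
`{𝐬ᵢ² 𝐬ⱼ 𝐬ᵢ⁻² 𝐬ⱼ⁻¹}`. -/
theorem stmt_9 {k : ℕ} (M : CoxeterMatrix (Fin k)) (hM : ∀ i j, i ≠ j → M i j ≠ 1) :
    Nonempty
      (Rack.EnvelGroup (DehnQuandle (CoxGroup M)
          (Set.range (PresentedGroup.of : Fin k → CoxGroup M))) ≃*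
        ArtinGroup M ⧸ Subgroup.normalClosure
          {g : ArtinGroup M | ∃ i j : Fin k,
            g = PresentedGroup.of i ^ 2 * PresentedGroup.of j *
                (PresentedGroup.of i ^ 2)⁻¹ * (PresentedGroup.of j)⁻¹}) :=
  stmt_9_general M
end

section
/- Let n ≥ 5, let B_n be the braid group on n strands with standard generating set S = {σ_1,…,σ_{n−1}}, and let D(S^{B_n}) be its Dehn quandle. If f : D(S^{B_n}) → Q is a surjective quandle homomorphism onto a quandle Q with at least two elements, then Q has at least n(n−1)/2 elements. -/
open Quandles

/-- The braid relations: `σᵢ σⱼ σᵢ = σⱼ σᵢ σⱼ` for `j = i + 1`, and `σᵢ σⱼ = σⱼ σᵢ`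
for `j ≥ i + 2` (indices `0, …, n - 2` for the braid group on `n` strands). -/
def braidRels (n : ℕ) : Set (FreeGroup (Fin (n - 1))) :=
  {r | ∃ i j : Fin (n - 1),
      ((j : ℕ) = (i : ℕ) + 1 ∧
        r = FreeGroup.of i * FreeGroup.of j * FreeGroup.of i *
            (FreeGroup.of j * FreeGroup.of i * FreeGroup.of j)⁻¹) ∨
      ((i : ℕ) + 2 ≤ (j : ℕ) ∧
        r = FreeGroup.of i * FreeGroup.of j * (FreeGroup.of i)⁻¹ * (FreeGroup.of j)⁻¹)}

/-- The braid group on `n` strands. -/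
abbrev BraidGroup (n : ℕ) := PresentedGroup (braidRels n)


/-!
Number the strands `0, …, n - 1`. The band generators `a_{i,j}` (`i < j`), conjugates of standard
generators crossing strands `i` and `j`, are `n(n-1)/2` elements of `D(S^{Bₙ})`; the point is that
a non-constant `f` separates them. The relation `f x = f y` survives conjugating both sides by an
element of the quandle, and so survives conjugating one side by a generator that commutes with the
other. If `f` identified two distinct bands, such conjugations shrink them to one of six small
configurations of two pairs of strands (chained, same left end, same right end, disjoint, nested,
crossing), each of which forces `f σᵢ = f σⱼ` for some `i ≠ j`. The braid relations spread this to
all generators: if `f u = f v`, and `z` commutes with `u` and braids with `v`, then `f z = f v`.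
As the `σᵢ` generate `Bₙ`, `f` is then constant.
-/

section GroupFacts

variable {G : Type*} [Group G] {a b g w : G}

theorem mul_mul_inv_eq_of_braid (h : a * b * a = b * a * b) : a * b * a⁻¹ = b⁻¹ * a * b := by
  rw [mul_inv_eq_iff_eq_mul, mul_assoc, mul_assoc, eq_inv_mul_iff_mul_eq, ← mul_assoc,
    ← mul_assoc, h]

theorem conj_conj_eq_of_braid (h : a * b * a = b * a * b) : a * (b * a * b⁻¹) * a⁻¹ = b := by
  calc a * (b * a * b⁻¹) * a⁻¹ = (a * b * a) * (a * b)⁻¹ := by group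
    _ = b := by rw [h]; group

theorem Commute.conj_conj_comm (h : Commute a g) :
    a * (g * w * g⁻¹) * a⁻¹ = g * (a * w * a⁻¹) * g⁻¹ := by
  calc a * (g * w * g⁻¹) * a⁻¹ = (a * g) * w * (a * g)⁻¹ := by group
    _ = (g * a) * w * (g * a)⁻¹ := by rw [h.eq]
    _ = g * (a * w * a⁻¹) * g⁻¹ := by group

theorem commute_conj_conj_of_braid (h : a * b * a = b * a * b) (hbw : Commute b w) :
    Commute a (b * (a * w * a⁻¹) * b⁻¹) := by
  refine mul_inv_eq_iff_eq_mul.1 ?_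
  calc a * (b * (a * w * a⁻¹) * b⁻¹) * a⁻¹ = (a * b * a) * w * (a * b * a)⁻¹ := by group
    _ = b * a * (b * w * b⁻¹) * (b * a)⁻¹ := by rw [h]; group
    _ = b * (a * w * a⁻¹) * b⁻¹ := by rw [hbw.mul_inv_cancel]; group

theorem braid_conj_of_commute (hg : Commute g b) (h : b * a * b = a * b * a) :
    b * (g * a * g⁻¹) * b = g * a * g⁻¹ * b * (g * a * g⁻¹) := by
  calc b * (g * a * g⁻¹) * b = (b * g) * a * (g⁻¹ * b) := by group
    _ = g * (b * a * b) * g⁻¹ := by rw [← hg.eq, hg.inv_left.eq]; group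
    _ = g * a * g⁻¹ * (g * b * g⁻¹) * (g * a * g⁻¹) := by rw [h]; group
    _ = g * a * g⁻¹ * b * (g * a * g⁻¹) := by rw [hg.mul_inv_cancel]

end GroupFacts

theorem Fintype.card_sigma_fin (n : ℕ) : Fintype.card (Σ j : Fin n, Fin j) = n * (n - 1) / 2 := by
  simp [Fin.sum_univ_eq_sum_range (fun j => j), Finset.sum_range_id]

namespace DehnQuandle

open Group

variable {G : Type*} [Group G] {S : Set G} {Q : Type*} [Quandle Q]

def ofMem {x : G} (hx : x ∈ conjugatesOfSet S) : DehnQuandle G S :=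
  ⟨x, mem_conjugatesOfSet_iff.1 hx⟩

def SameImage (f : DehnQuandle G S →◃ Q) (x y : G) : Prop :=
  ∃ (hx : x ∈ conjugatesOfSet S) (hy : y ∈ conjugatesOfSet S), f (ofMem hx) = f (ofMem hy)

variable {f : DehnQuandle G S →◃ Q} {s x y z u v : G}

theorem map_ofMem_conj (hs : s ∈ conjugatesOfSet S) (hx : x ∈ conjugatesOfSet S) :
    f (ofMem (conj_mem_conjugatesOfSet (c := s) hx)) = f (ofMem hs) ◃ f (ofMem hx) :=
  f.map_act (x := ofMem hs) (y := ofMem hx)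

theorem SameImage.refl (hx : x ∈ conjugatesOfSet S) : SameImage f x x := ⟨hx, hx, rfl⟩

theorem SameImage.symm : SameImage f x y → SameImage f y x
  | ⟨hx, hy, h⟩ => ⟨hy, hx, h.symm⟩

theorem SameImage.trans : SameImage f x y → SameImage f y z → SameImage f x z
  | ⟨hx, _, h⟩, ⟨_, hz, h'⟩ => ⟨hx, hz, h.trans h'⟩

theorem SameImage.conj (huv : SameImage f u v) (hxy : SameImage f x y) :
    SameImage f (u * x * u⁻¹) (v * y * v⁻¹) := by
  obtain ⟨hu, hv, h⟩ := huv
  obtain ⟨hx, hy, h'⟩ := hxy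
  refine ⟨conj_mem_conjugatesOfSet hx, conj_mem_conjugatesOfSet hy, ?_⟩
  rw [map_ofMem_conj hu hx, map_ofMem_conj hv hy, h, h']

theorem sameImage_conj_iff (hs : s ∈ conjugatesOfSet S) :
    SameImage f (s * x * s⁻¹) (s * y * s⁻¹) ↔ SameImage f x y := by
  refine ⟨fun ⟨hx, hy, h⟩ => ?_, (SameImage.refl hs).conj⟩
  have hx' : x ∈ conjugatesOfSet S := by
    simpa [mul_assoc] using conj_mem_conjugatesOfSet (c := s⁻¹) hx
  have hy' : y ∈ conjugatesOfSet S := by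
    simpa [mul_assoc] using conj_mem_conjugatesOfSet (c := s⁻¹) hy
  refine ⟨hx', hy', (Rack.left_cancel (f (ofMem hs))).1 ?_⟩
  rw [← map_ofMem_conj hs hx', ← map_ofMem_conj hs hy']
  exact h

theorem sameImage_conj_iff_of_commute (hs : s ∈ conjugatesOfSet S) (hsx : Commute s x) :
    SameImage f (s * y * s⁻¹) x ↔ SameImage f y x := by
  conv_lhs => rw [← hsx.mul_inv_cancel]
  exact sameImage_conj_iff hs

theorem SameImage.of_commute_of_braid (huv : SameImage f u v) (hz : z ∈ conjugatesOfSet S)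
    (hcomm : Commute u z) (hbraid : z * v * z = v * z * v) : SameImage f z v := by
  have h := huv.conj (SameImage.refl hz)
  rw [hcomm.mul_inv_cancel] at h
  rwa [← sameImage_conj_iff hz, mul_inv_cancel_right, conj_conj_eq_of_braid hbraid] at h

theorem eq_of_forall_sameImage (hS : Subgroup.closure S = ⊤)
    (hgen : ∀ s ∈ S, ∀ t ∈ S, SameImage f s t) (x y : DehnQuandle G S) : f x = f y := by
  have key : ∀ g : G, ∀ t ∈ S, ∀ s ∈ S, SameImage f (g * t * g⁻¹) s := by
    intro g
    induction (hS ▸ Subgroup.mem_top g : g ∈ Subgroup.closure S)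
      using Subgroup.closure_induction_left with
    | one => simpa using hgen
    | mul_left r hr g _ ih =>
      intro t ht s hs
      have h := (SameImage.refl (subset_conjugatesOfSet hr)).conj (ih t ht r hr)
      rw [mul_inv_cancel_right] at h
      exact (by simpa [mul_assoc] using h : SameImage f _ r).trans (hgen r hr s hs)
    | inv_mul_cancel r hr g _ ih =>
      intro t ht s hs
      have h : SameImage f (r * (r⁻¹ * g * t * (r⁻¹ * g)⁻¹) * r⁻¹) (r * r * r⁻¹) := by
        simpa [mul_assoc] using ih t ht r hr
      exact ((sameImage_conj_iff (subset_conjugatesOfSet hr)).1 h).trans (hgen r hr s hs)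
  obtain ⟨x, t, ht, hxt⟩ := x
  obtain ⟨y, t', ht', hyt'⟩ := y
  obtain ⟨g, rfl⟩ := isConj_iff.1 hxt
  obtain ⟨g', rfl⟩ := isConj_iff.1 hyt'
  obtain ⟨_, _, h⟩ := (key g t ht t' ht').trans (key g' t' ht' t' ht').symm
  exact h

end DehnQuandle

namespace BraidGroup

open PresentedGroup Group

variable {n i j k l m t : ℕ}

/-- The generator `σ_{i+1}` (generators are numbered from `0` here), with junk value `1` for
`i ≥ n - 1`. -/
def gen (n i : ℕ) : BraidGroup n := if h : i < n - 1 then of ⟨i, h⟩ else 1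

theorem gen_coe (x : Fin (n - 1)) : gen n x = of x := dif_pos x.isLt

theorem gen_mem (h : i < n - 1) :
    gen n i ∈ conjugatesOfSet (Set.range (of : Fin (n - 1) → BraidGroup n)) :=
  subset_conjugatesOfSet ⟨⟨i, h⟩, (gen_coe ⟨i, h⟩).symm⟩

theorem gen_braid (h : i + 1 < n - 1) :
    gen n i * gen n (i + 1) * gen n i = gen n (i + 1) * gen n i * gen n (i + 1) := by
  simp only [gen, dif_pos h, dif_pos (by omega : i < n - 1)]
  exact mk_eq_mk_of_mul_inv_mem ⟨⟨i, by omega⟩, ⟨i + 1, h⟩, Or.inl ⟨rfl, rfl⟩⟩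

theorem commute_gen (h : i + 2 ≤ j) : Commute (gen n i) (gen n j) := by
  by_cases hj : j < n - 1
  · simp only [gen, dif_pos hj, dif_pos (by omega : i < n - 1)]
    refine mk_eq_mk_of_mul_inv_mem ⟨⟨i, by omega⟩, ⟨j, hj⟩, Or.inr ⟨h, ?_⟩⟩
    simp [mul_assoc]
  · simp [gen, dif_neg hj]

/-- The band generator `a_{i,j} = w σ_{i+1} w⁻¹` with `w = σ_j ⋯ σ_{i+2}`, which crosses
strands `i` and `j`; it is `gen n i` when `j ≤ i + 1`. -/
def band (n i : ℕ) : ℕ → BraidGroup n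
  | 0 => gen n i
  | j + 1 => if i < j then gen n j * band n i j * (gen n j)⁻¹ else gen n i

theorem band_succ_self (i : ℕ) : band n i (i + 1) = gen n i := by
  simp [band]

theorem band_succ (h : i < j) : band n i (j + 1) = gen n j * band n i j * (gen n j)⁻¹ := by
  simp [band, h]

theorem band_mem (h : i < n - 1) (j : ℕ) :
    band n i j ∈ conjugatesOfSet (Set.range (of : Fin (n - 1) → BraidGroup n)) := by
  induction j with
  | zero => exact gen_mem h
  | succ j ih =>
    by_cases hij : i < j
    · rw [band_succ hij]; exact conj_mem_conjugatesOfSet ih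
    · simpa [band, hij] using gen_mem h

theorem commute_gen_band_of_gt (hij : i < j) (hjt : j < t) : Commute (gen n t) (band n i j) := by
  induction j, hij using Nat.le_induction with
  | base => rw [band_succ_self]; exact (commute_gen (by omega)).symm
  | succ j hij ih =>
    rw [band_succ hij]
    have h : Commute (gen n t) (gen n j) := (commute_gen (by omega)).symm
    exact (h.mul_right (ih (by omega))).mul_right h.inv_right

theorem commute_gen_band_of_lt (hti : t + 2 ≤ i) (j : ℕ) : Commute (gen n t) (band n i j) := by
  induction j with
  | zero => exact commute_gen hti
  | succ j ih =>
    by_cases hij : i < j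
    · rw [band_succ hij]
      have h : Commute (gen n t) (gen n j) := commute_gen (by omega)
      exact (h.mul_right ih).mul_right h.inv_right
    · simpa [band, hij] using commute_gen hti

theorem commute_gen_band_of_lt_of_lt (hit : i < t) (htj : t + 1 < j) (hj : j ≤ n - 1) :
    Commute (gen n t) (band n i j) := by
  induction j, htj using Nat.le_induction with
  | base =>
    rw [band_succ (by omega), band_succ hit]
    exact commute_conj_conj_of_braid (gen_braid (by omega))
      (commute_gen_band_of_gt hit (by omega))
  | succ j hj ih =>
    rw [band_succ (by omega)]
    have h : Commute (gen n t) (gen n j) := commute_gen (by omega)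
    exact (h.mul_right (ih (by omega))).mul_right h.inv_right

theorem gen_conj_band (hij : i + 1 < j) (hj : j ≤ n - 1) :
    gen n i * band n i j * (gen n i)⁻¹ = band n (i + 1) j := by
  induction j, hij using Nat.le_induction with
  | base =>
    rw [band_succ (by omega), band_succ_self, band_succ_self]
    exact conj_conj_eq_of_braid (gen_braid (by omega))
  | succ j hj ih =>
    rw [band_succ (by omega), band_succ (by omega), ← ih (by omega)]
    exact (commute_gen (by omega)).conj_conj_comm

section SameImage

open DehnQuandle

variable {Q : Type*} [Quandle Q]
  {f : DehnQuandle (BraidGroup n) (Set.range (of : Fin (n - 1) → BraidGroup n)) →◃ Q}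

theorem sameImage_band_of_le_right {X : BraidGroup n} (hij : i < j) (hjl : j ≤ l) (hl : l ≤ n - 1)
    (hX : ∀ t, j ≤ t → t < l → Commute (gen n t) X) (h : SameImage f (band n i l) X) :
    SameImage f (band n i j) X := by
  induction l, hjl using Nat.le_induction with
  | base => exact h
  | succ l hjl ih =>
    refine ih (by omega) (fun t ht ht' => hX t ht (by omega)) ?_
    rwa [band_succ (by omega),
      sameImage_conj_iff_of_commute (gen_mem (by omega)) (hX l hjl (by omega))] at h

theorem sameImage_band_of_le_left {X : BraidGroup n} (him : i ≤ m) (hmj : m < j)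
    (hj : j ≤ n - 1) (hX : ∀ t, i ≤ t → t < m → Commute (gen n t) X)
    (h : SameImage f (band n i j) X) : SameImage f (band n m j) X := by
  induction m, him using Nat.le_induction with
  | base => exact h
  | succ m him ih =>
    rw [← gen_conj_band hmj hj,
      sameImage_conj_iff_of_commute (gen_mem (by omega)) (hX m him (by omega))]
    exact ih (by omega) (fun t ht ht' => hX t ht (by omega))

theorem sameImage_band_band_of_le_right (hi : i < j) (hk : k < j) (hjl : j ≤ l) (hl : l ≤ n - 1)
    (h : SameImage f (band n i l) (band n k l)) : SameImage f (band n i j) (band n k j) := by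
  induction l, hjl using Nat.le_induction with
  | base => exact h
  | succ l hjl ih =>
    refine ih (by omega) ?_
    rwa [band_succ (by omega), band_succ (by omega), sameImage_conj_iff (gen_mem (by omega))] at h

variable (f) in
def GeneratorsCollide : Prop := ∃ i j, i < j ∧ j < n - 1 ∧ SameImage f (gen n i) (gen n j)

theorem forall_sameImage_gen_succ (ht : t + 1 < n - 1)
    (h : SameImage f (gen n t) (gen n (t + 1))) :
    ∀ m, m + 1 < n - 1 → SameImage f (gen n m) (gen n (m + 1)) := by
  have up : ∀ m, t ≤ m → m + 1 < n - 1 → SameImage f (gen n m) (gen n (m + 1)) := by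
    intro m hm
    induction m, hm using Nat.le_induction with
    | base => exact fun _ => h
    | succ m _ ih =>
      exact fun hm => ((ih (by omega)).of_commute_of_braid (gen_mem hm) (commute_gen le_rfl)
        (gen_braid hm).symm).symm
  have down : ∀ m, m ≤ t → SameImage f (gen n m) (gen n (m + 1)) := by
    intro m hm
    induction hm using Nat.decreasingInduction with
    | self => exact h
    | of_succ m _ ih =>
      exact ih.symm.of_commute_of_braid (gen_mem (by omega)) (commute_gen le_rfl).symm
        (gen_braid (by omega))
  intro m hm
  rcases le_total t m with htm | hmt
  exacts [up m htm hm, down m hmt]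

theorem exists_sameImage_gen_succ (hn : 5 ≤ n) (hij : i < j) (hj : j < n - 1)
    (h : SameImage f (gen n i) (gen n j)) :
    ∃ t, t + 1 < n - 1 ∧ SameImage f (gen n t) (gen n (t + 1)) := by
  obtain rfl | rfl | hij := show j = i + 1 ∨ j = i + 2 ∨ i + 3 ≤ j by omega
  · exact ⟨i, hj, h⟩
  · by_cases hi : i + 3 < n - 1
    · exact ⟨i + 2, hi, (h.of_commute_of_braid (gen_mem hi) (commute_gen (by omega))
        (gen_braid hi).symm).symm⟩
    · obtain ⟨m, rfl⟩ : ∃ m, i = m + 1 := ⟨i - 1, by omega⟩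
      exact ⟨m, by omega, h.symm.of_commute_of_braid (gen_mem (by omega))
        (commute_gen (by omega)).symm (gen_braid (by omega))⟩
  · exact ⟨i, by omega, (h.symm.of_commute_of_braid (gen_mem (by omega))
      (commute_gen hij).symm (gen_braid (by omega)).symm).symm⟩

theorem GeneratorsCollide.apply_eq (hn : 5 ≤ n) (h : GeneratorsCollide f)
    (x y : DehnQuandle (BraidGroup n) (Set.range (of : Fin (n - 1) → BraidGroup n))) :
    f x = f y := by
  obtain ⟨i, j, hij, hj, h⟩ := h
  obtain ⟨t, ht, h⟩ := exists_sameImage_gen_succ hn hij hj h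
  have hsucc := forall_sameImage_gen_succ ht h
  have hzero : ∀ m, m < n - 1 → SameImage f (gen n m) (gen n 0) := by
    intro m
    induction m with
    | zero => exact fun hm => SameImage.refl (gen_mem hm)
    | succ m ih => exact fun hm => (hsucc m hm).symm.trans (ih (by omega))
  refine eq_of_forall_sameImage (closure_range_of _) ?_ x y
  rintro _ ⟨a, rfl⟩ _ ⟨b, rfl⟩
  rw [← gen_coe a, ← gen_coe b]
  exact (hzero a a.isLt).trans (hzero b b.isLt).symm

theorem generatorsCollide_of_chained (hij : i < j) (hjl : j < l) (hl : l ≤ n - 1)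
    (h : SameImage f (band n i j) (band n j l)) : GeneratorsCollide f := by
  obtain ⟨j, rfl⟩ : ∃ j', j = j' + 1 := ⟨j - 1, by omega⟩
  have h₁ := sameImage_band_of_le_right (lt_add_one _) (by omega) hl
    (fun t ht _ => commute_gen_band_of_gt hij (by omega)) h.symm
  rw [band_succ_self] at h₁
  have h₂ := sameImage_band_of_le_left (m := j) (by omega) (lt_add_one _) (by omega)
    (fun t _ ht => commute_gen (by omega)) h₁.symm
  rw [band_succ_self] at h₂
  exact ⟨j, j + 1, lt_add_one _, by omega, h₂⟩

theorem generatorsCollide_of_same_left (hij : i < j) (hjl : j < l) (hl : l ≤ n - 1)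
    (h : SameImage f (band n i j) (band n i l)) : GeneratorsCollide f := by
  have h₁ := sameImage_band_of_le_right (j := j + 1) (by omega) hjl hl
    (fun t ht _ => commute_gen_band_of_gt hij (by omega)) h.symm
  have h₂ := sameImage_band_of_le_right (lt_add_one i) (by omega) (by omega)
    (fun t ht _ => commute_gen_band_of_lt_of_lt (by omega) (by omega) (by omega)) h₁.symm
  rw [band_succ_self] at h₂
  have h₃ := sameImage_band_of_le_right (j := i + 2) (by omega) (by omega) (by omega)
    (fun t ht _ => (commute_gen (by omega)).symm) h₂.symm
  rw [band_succ (lt_add_one i), band_succ_self] at h₃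
  have h₄ := (SameImage.refl (gen_mem (n := n) (i := i) (by omega))).conj h₃
  rw [conj_conj_eq_of_braid (gen_braid (by omega)), mul_inv_cancel_right] at h₄
  exact ⟨i, i + 1, lt_add_one _, by omega, h₄.symm⟩

theorem generatorsCollide_of_same_right (hik : i < k) (hkj : k < j) (hj : j ≤ n - 1)
    (h : SameImage f (band n i j) (band n k j)) : GeneratorsCollide f := by
  obtain ⟨k, rfl⟩ : ∃ k', k = k' + 1 := ⟨k - 1, by omega⟩
  have h₁ := sameImage_band_of_le_left (m := k) (by omega) (by omega) hj
    (fun t _ ht => commute_gen_band_of_lt (by omega) j) h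
  have h₂ := sameImage_band_band_of_le_right (j := k + 2) (by omega) (by omega) (by omega) hj h₁
  rw [band_succ (lt_add_one k), band_succ_self, band_succ_self,
    sameImage_conj_iff_of_commute (gen_mem (by omega)) (Commute.refl _)] at h₂
  exact ⟨k, k + 1, lt_add_one _, by omega, h₂⟩

theorem generatorsCollide_of_disjoint (hij : i < j) (hjk : j < k) (hkl : k < l)
    (hl : l ≤ n - 1) (h : SameImage f (band n i j) (band n k l)) : GeneratorsCollide f := by
  have h₁ := sameImage_band_of_le_right (lt_add_one k) hkl hl
    (fun t ht _ => commute_gen_band_of_gt hij (by omega)) h.symm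
  rw [band_succ_self] at h₁
  have h₂ := sameImage_band_of_le_right (lt_add_one i) hij (by omega)
    (fun t _ ht => commute_gen (by omega)) h₁.symm
  rw [band_succ_self] at h₂
  exact ⟨i, k, by omega, by omega, h₂⟩

theorem generatorsCollide_of_nested (hik : i < k) (hkl : k < l) (hlj : l < j) (hj : j ≤ n - 1)
    (h : SameImage f (band n i j) (band n k l)) : GeneratorsCollide f := by
  obtain ⟨k, rfl⟩ : ∃ k', k = k' + 1 := ⟨k - 1, by omega⟩
  have h₁ := sameImage_band_of_le_right (lt_add_one (k + 1)) hkl (by omega)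
    (fun t _ _ => commute_gen_band_of_lt_of_lt (by omega) (by omega) hj) h.symm
  rw [band_succ_self] at h₁
  have h₂ := sameImage_band_of_le_left (m := k) (by omega) (by omega) hj
    (fun t _ ht => commute_gen (by omega)) h₁.symm
  have h₃ := sameImage_band_of_le_right (j := k + 3) (by omega) (by omega) hj
    (fun t ht _ => (commute_gen (by omega)).symm) h₂
  rw [band_succ (by omega), band_succ (by omega), band_succ_self] at h₃
  set a := gen n k
  set b := gen n (k + 1)
  set c := gen n (k + 2)
  have hbc : b * c * b⁻¹ = c⁻¹ * b * c := mul_mul_inv_eq_of_braid (gen_braid (by omega))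
  have hb : c * (b * c * b⁻¹) * c⁻¹ = b := by rw [hbc]; simp [mul_assoc]
  have h₄ : SameImage f (c * (b * a * b⁻¹) * c⁻¹) (c * (b * c * b⁻¹) * c⁻¹) := by rwa [hb]
  rw [sameImage_conj_iff (gen_mem (by omega)), sameImage_conj_iff (gen_mem (by omega))] at h₄
  exact ⟨k, k + 2, by omega, by omega, h₄⟩

theorem generatorsCollide_of_crossing (hn : 5 ≤ n) (hik : i < k) (hkj : k < j) (hjl : j < l)
    (hl : l ≤ n - 1) (h : SameImage f (band n i j) (band n k l)) : GeneratorsCollide f := by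
  obtain ⟨k, rfl⟩ : ∃ k', k = k' + 1 := ⟨k - 1, by omega⟩
  have h₁ := sameImage_band_of_le_right (j := j + 1) (by omega) (by omega) hl
    (fun t ht _ => commute_gen_band_of_gt (by omega : i < j) (by omega)) h.symm
  have h₂ := sameImage_band_of_le_left (m := k) (by omega) (by omega) (by omega)
    (fun t _ ht => commute_gen_band_of_lt (by omega) _) h₁.symm
  have h₃ := sameImage_band_of_le_right (j := k + 2) (by omega) (by omega) (by omega)
    (fun t ht _ => commute_gen_band_of_lt_of_lt (by omega) (by omega) (by omega)) h₂
  have h₄ := sameImage_band_of_le_right (j := k + 3) (by omega) (by omega) (by omega)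
    (fun t ht _ => commute_gen_band_of_gt (by omega) (by omega)) h₃.symm
  rw [band_succ (by omega), band_succ_self, band_succ (by omega), band_succ_self] at h₄
  set a := gen n k
  set b := gen n (k + 1)
  set c := gen n (k + 2)
  have hb := gen_mem (n := n) (i := k + 1) (by omega)
  -- Now `b a b⁻¹ ∼ c b c⁻¹`. The generator after `c`, or else the one before `a` (one of them
  -- exists as `n ≥ 5`), commutes with one side and braids with the other.
  by_cases hk : k + 3 < n - 1
  · set d := gen n (k + 3)
    have had : Commute a d := commute_gen (by omega)
    have hbd : Commute b d := commute_gen (by omega)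
    have hcb : c * b * c⁻¹ = b⁻¹ * c * b⁻¹⁻¹ := by
      rw [inv_inv]; exact mul_mul_inv_eq_of_braid (gen_braid (by omega)).symm
    have hd := h₄.symm.of_commute_of_braid (gen_mem hk)
      ((hbd.mul_left had).mul_left hbd.inv_left)
      (hcb ▸ braid_conj_of_commute hbd.inv_left (gen_braid hk).symm)
    exact ⟨k, k + 3, by omega, hk,
      ((sameImage_conj_iff_of_commute hb hbd).1 (hd.trans h₄).symm)⟩
  · obtain ⟨m, rfl⟩ : ∃ m, k = m + 1 := ⟨k - 1, by omega⟩
    have hbe : Commute b (gen n m) := (commute_gen (by omega)).symm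
    have hce : Commute c (gen n m) := (commute_gen (by omega)).symm
    have he := h₄.of_commute_of_braid (gen_mem (by omega))
      ((hce.mul_left hbe).mul_left hce.inv_left)
      (braid_conj_of_commute hbe (gen_braid (by omega)))
    exact ⟨m, m + 1, by omega, by omega,
      ((sameImage_conj_iff_of_commute hb hbe).1 he.symm).symm⟩

theorem generatorsCollide_of_sameImage_band (hn : 5 ≤ n) (hij : i < j) (hj : j ≤ n - 1)
    (hkl : k < l) (hl : l ≤ n - 1) (hne : (i, j) ≠ (k, l))
    (h : SameImage f (band n i j) (band n k l)) : GeneratorsCollide f := by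
  wlog hik : i ≤ k generalizing i j k l
  · exact this hkl hl hij hj hne.symm h.symm (by omega)
  obtain rfl | hik := hik.eq_or_lt
  · obtain hjl | rfl | hlj := lt_trichotomy j l
    · exact generatorsCollide_of_same_left hij hjl hl h
    · exact absurd rfl hne
    · exact generatorsCollide_of_same_left hkl hlj hj h.symm
  · obtain hkj | rfl | hjk := lt_trichotomy k j
    · obtain hjl | rfl | hlj := lt_trichotomy j l
      · exact generatorsCollide_of_crossing hn hik hkj hjl hl h
      · exact generatorsCollide_of_same_right hik hkj hj h
      · exact generatorsCollide_of_nested hik hkl hlj hj h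
    · exact generatorsCollide_of_chained hij hkl hl h
    · exact generatorsCollide_of_disjoint hij hjk hkl hl h

def bandOfPair (p : Σ j : Fin n, Fin j) :
    DehnQuandle (BraidGroup n) (Set.range (of : Fin (n - 1) → BraidGroup n)) :=
  ofMem (band_mem (p.2.isLt.trans_le (Nat.le_sub_one_of_lt p.1.isLt)) p.1)

theorem injective_bandOfPair (hn : 5 ≤ n) (hcollide : ¬ GeneratorsCollide f) :
    Function.Injective (f ∘ bandOfPair) := by
  rintro ⟨j, i⟩ ⟨l, k⟩ h
  by_contra hne
  refine hcollide (generatorsCollide_of_sameImage_band hn i.isLt (by omega) k.isLt (by omega)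
    (fun hikjl => ?_) ⟨_, _, h⟩)
  obtain ⟨hik, hjl⟩ := Prod.mk.inj hikjl
  obtain rfl : j = l := Fin.ext hjl
  obtain rfl : i = k := Fin.ext hik
  exact hne rfl

end SameImage

end BraidGroup

/-- for `n ≥ 5`, any quandle quotient of the Dehn quandle `D(S^{Bₙ})` of
the braid group with at least two elements has at least `n(n-1)/2` elements. -/
theorem stmt_10 (n : ℕ) (hn : 5 ≤ n) {Q : Type*} [Quandle Q]
    (f : DehnQuandle (BraidGroup n)
        (Set.range (PresentedGroup.of : Fin (n - 1) → BraidGroup n)) →◃ Q)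
    (hf : Function.Surjective f) (hQ : ∃ a b : Q, a ≠ b) :
    ((n * (n - 1) / 2 : ℕ) : Cardinal) ≤ Cardinal.mk Q := by
  obtain ⟨a, b, hab⟩ := hQ
  have hcollide : ¬ BraidGroup.GeneratorsCollide f := fun h => by
    obtain ⟨x, rfl⟩ := hf a
    obtain ⟨y, rfl⟩ := hf b
    exact hab (h.apply_eq hn x y)
  have := Cardinal.lift_mk_le_lift_mk_of_injective (BraidGroup.injective_bandOfPair hn hcollide)
  rwa [Cardinal.mk_fintype, Fintype.card_sigma_fin, Cardinal.lift_natCast,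
    Cardinal.lift_uzero] at this
end

section
/- Let p be a prime and g ≥ 1. An element A ∈ Sp(2g, Z_p) commutes with T = I_{2g} − E_{1,2} if and only if the first column of A equals (a, 0, 0, …, 0)ᵀ and the second row of A equals (0, a, 0, 0, …, 0) for some a ∈ Z_p with a = ±1 (mod p). -/
/-- The standard symplectic form matrix `J`: block-diagonal with `g` diagonal blocks
`[[0, 1], [-1, 0]]` (using 0-indexed rows and columns of `Fin (2 * g)`). -/
def Jmat (g p : ℕ) : Matrix (Fin (2 * g)) (Fin (2 * g)) (ZMod p) := fun i j =>
  if (i : ℕ) % 2 = 0 ∧ (j : ℕ) = (i : ℕ) + 1 then 1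
  else if (j : ℕ) % 2 = 0 ∧ (i : ℕ) = (j : ℕ) + 1 then -1
  else 0

/-- The matrix `T = I_{2g} - E_{1,2}`, where `E_{1,2}` has a single nonzero entry `1`
in the (1,2) position (0-indexed: position `(0,1)`). -/
def Tmat (g p : ℕ) : Matrix (Fin (2 * g)) (Fin (2 * g)) (ZMod p) := fun i j =>
  if i = j then 1
  else if (i : ℕ) = 0 ∧ (j : ℕ) = 1 then -1
  else 0

/-!
Since `T = 1 - E₁₂`, commuting with `T` is the same as commuting with `E₁₂`, and
`A E₁₂ = E₁₂ A` says exactly that the first column of `A` is `a e₁` and the second row is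
`a e₂ᵀ`, with the same `a`. For such `A`, the first row of `J` being `e₂ᵀ` gives
`(AᵀJA)₁₂ = a · a`, while `J₁₂ = 1`; so `a² = 1`, i.e. `a = ±1` in the field `ℤ/p`.
-/

namespace Matrix

variable {n R : Type*} [DecidableEq n] [Fintype n]

theorem commute_single_one_iff [Semiring R] {i j : n} (hij : i ≠ j)
    (A : Matrix n n R) :
    Commute A (single i j 1) ↔
      (∀ k ≠ i, A k i = 0) ∧ (∀ l ≠ j, A j l = 0) ∧ A i i = A j j := by
  constructor
  · intro h
    have entry := fun k l => congrFun (congrFun h.eq k) l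
    refine ⟨fun k hk => ?_, fun l hl => ?_, ?_⟩
    · simpa [hk] using entry k j
    · simpa [hl] using (entry i l).symm
    · simpa using entry i j
  · rintro ⟨hcol, hrow, hdiag⟩
    ext k l
    by_cases hl : l = j <;> by_cases hk : k = i
    · subst hk hl; simp [hdiag]
    · subst hl; simp [hk, hcol k hk]
    · subst hk; simp [hl, hrow l hl]
    · simp [hk, hl]

theorem commute_one_sub_iff [Ring R] {A B : Matrix n n R} :
    Commute A (1 - B) ↔ Commute A B :=
  ⟨fun h => by simpa using (Commute.one_right A).sub_right h,
    (Commute.one_right A).sub_right⟩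

variable [CommSemiring R]

theorem mul_apply_of_row_eq_single {M A : Matrix n n R} {k l : n} (hM : M k = Pi.single l 1)
    (j : n) : (M * A) k j = A l j := by
  rw [mul_apply', hM, single_dotProduct, one_mul]

theorem apply_mul_apply_eq_one_of_transpose_mul_mul_eq {M A : Matrix n n R}
    (hA : Aᵀ * M * A = M) {k l : n} (hM : M k = Pi.single l 1) (hcol : ∀ i ≠ k, A i k = 0) :
    A k k * A l l = 1 := by
  calc A k k * A l l = (Aᵀ * M * A) k l := by
        rw [Matrix.mul_assoc, mul_apply,
          Finset.sum_eq_single k (fun i _ hi => by simp [hcol i hi]) (by simp), transpose_apply,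
          mul_apply_of_row_eq_single hM]
    _ = 1 := by rw [hA, hM, Pi.single_eq_same]

end Matrix

theorem forall_eq_ite_iff {ι R : Type*} [DecidableEq ι] [Zero R] (f : ι → R) (k : ι) (a : R) :
    (∀ i, f i = if i = k then a else 0) ↔ f k = a ∧ ∀ i ≠ k, f i = 0 := by
  refine ⟨fun h => ⟨by simpa using h k, fun i hi => by simpa [hi] using h i⟩, ?_⟩
  rintro ⟨hk, hne⟩ i
  split_ifs with hi
  · exact hi ▸ hk
  · exact hne i hi

theorem Tmat_eq_one_sub_single {g : ℕ} (p : ℕ) {i₀ i₁ : Fin (2 * g)} (h₀ : (i₀ : ℕ) = 0)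
    (h₁ : (i₁ : ℕ) = 1) : Tmat g p = 1 - Matrix.single i₀ i₁ 1 := by
  ext i j
  simp only [Tmat, Matrix.sub_apply, Matrix.one_apply, Matrix.single_apply, Fin.ext_iff, h₀,
    h₁]
  split_ifs <;> first | (exfalso; omega) | simp

theorem Jmat_row_zero {g : ℕ} (p : ℕ) {i₀ i₁ : Fin (2 * g)} (h₀ : (i₀ : ℕ) = 0)
    (h₁ : (i₁ : ℕ) = 1) : Jmat g p i₀ = Pi.single i₁ 1 := by
  ext j
  simp only [Jmat, Pi.single_apply, Fin.ext_iff, h₀, h₁]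
  split_ifs <;> simp_all

/-- a symplectic matrix `A ∈ Sp(2g, ℤ_p)` commutes with `T = I - E_{1,2}`
iff its first column is `(a, 0, …, 0)ᵀ` and its second row is `(0, a, 0, …, 0)` with
`a = ±1`. -/
theorem stmt_12 (p : ℕ) (hp : p.Prime) (g : ℕ) (hg : 1 ≤ g)
    (A : Matrix (Fin (2 * g)) (Fin (2 * g)) (ZMod p))
    (hA : A.transpose * Jmat g p * A = Jmat g p) :
    A * Tmat g p = Tmat g p * A ↔
      ∃ a : ZMod p, (a = 1 ∨ a = -1) ∧
        (∀ i : Fin (2 * g), A i ⟨0, by omega⟩ = if (i : ℕ) = 0 then a else 0) ∧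
        (∀ j : Fin (2 * g), A ⟨1, by omega⟩ j = if (j : ℕ) = 1 then a else 0) := by
  have : Fact p.Prime := ⟨hp⟩
  set i₀ : Fin (2 * g) := ⟨0, by omega⟩
  set i₁ : Fin (2 * g) := ⟨1, by omega⟩
  have val_eq_zero_iff (i : Fin (2 * g)) : (i : ℕ) = 0 ↔ i = i₀ :=
    (Fin.ext_iff (b := i₀)).symm
  have val_eq_one_iff (i : Fin (2 * g)) : (i : ℕ) = 1 ↔ i = i₁ :=
    (Fin.ext_iff (b := i₁)).symm
  simp only [val_eq_zero_iff, val_eq_one_iff, forall_eq_ite_iff]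
  have hT : Tmat g p = 1 - Matrix.single i₀ i₁ 1 := Tmat_eq_one_sub_single p rfl rfl
  rw [← commute_iff_eq, hT, Matrix.commute_one_sub_iff,
    Matrix.commute_single_one_iff (by simp [i₀, i₁, Fin.ext_iff])]
  constructor
  · rintro ⟨hcol, hrow, hdiag⟩
    have hJ : Jmat g p i₀ = Pi.single i₁ 1 := Jmat_row_zero p rfl rfl
    have hsq := Matrix.apply_mul_apply_eq_one_of_transpose_mul_mul_eq hA hJ hcol
    rw [← hdiag] at hsq
    exact ⟨A i₀ i₀, mul_self_eq_one_iff.mp hsq, ⟨rfl, hcol⟩, ⟨hdiag.symm, hrow⟩⟩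
  · rintro ⟨a, -, ⟨ha₀, hcol⟩, ⟨ha₁, hrow⟩⟩
    exact ⟨hcol, hrow, ha₀.trans ha₁.symm⟩
end

section
/- Let t = [[1,1],[0,1]] ∈ SL(2, Z) and let Q = {g t g⁻¹ : g ∈ SL(2, Z)} be the set of conjugates of t, regarded as a quandle under x*y = y x y⁻¹. Let π : Q → Q_2 be a universal involutory (2-)quandle quotient. Then Q_2 is isomorphic to the dihedral quandle of order 3, i.e., the set Z/3Z with operation i*j = 2j − i. -/
open Quandles

universe u v

/-- The matrix `t = [[1,1],[0,1]]` in `SL(2, ℤ)`; its conjugacy class is the Dehn quandle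
`D₁ⁿˢ` of the torus (the knot quandle of the trefoil). -/
def tSL2Z : Matrix.SpecialLinearGroup (Fin 2) ℤ :=
  ⟨!![1, 1; 0, 1], by simp [Matrix.det_fin_two_of]⟩

/-
Reducing mod 2 sends the conjugacy class of `t` onto the three transvections of
`SL(2, 𝔽₂) ≅ S₃`, i.e. onto its transpositions, which under conjugation form the dihedral
quandle `R₃`. As `R₃` is involutory, the universal property yields `g : Q₂ →◃ R₃`.
Conversely `t` and `b = [[1,0],[-1,1]]` satisfy the braid relation `tbt = btb`, so in the
involutory quandle `Q₂` the images of `t` and `b` span a copy `h : R₃ →◃ Q₂` of `R₃`.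
Since `t` and `b` generate `SL(2, ℤ)`, every conjugate of `t` is reached from `t` and `b` by
`◃` and `◃⁻¹`; hence `π` is `h` composed with the reduction, so `h` is onto, and `g ∘ h = id`.
-/

theorem Rack.isInvolutory_iff_isNQuandle_two {R : Type*} [Quandle R] :
    Rack.IsInvolutory R ↔ IsNQuandle R 2 :=
  ⟨fun h x y => h y x, fun h x y => h y x⟩

theorem ShelfHom.map_invAct {R₁ R₂ : Type*} [Rack R₁] [Rack R₂] (f : R₁ →◃ R₂) (x y : R₁) :
    f (x ◃⁻¹ y) = f x ◃⁻¹ f y := by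
  rw [← Rack.left_cancel (f x), ← f.map_act, Rack.act_invAct_eq, Rack.act_invAct_eq]

instance ULift.instQuandle {R : Type u} [Quandle R] : Quandle (ULift.{v} R) where
  act x y := ⟨x.down ◃ y.down⟩
  self_distrib := congrArg ULift.up Shelf.self_distrib
  invAct x y := ⟨x.down ◃⁻¹ y.down⟩
  left_inv x y := congrArg ULift.up (Rack.left_inv x.down y.down)
  right_inv x y := congrArg ULift.up (Rack.right_inv x.down y.down)
  fix := congrArg ULift.up Quandle.fix

theorem IsNQuandle.ulift {R : Type u} [Quandle R] {n : ℕ} (h : IsNQuandle R n) :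
    IsNQuandle (ULift.{v} R) n := fun x y => by
  have hup : Function.Semiconj ULift.up (fun a => y.down ◃ a) (fun a => y ◃ a) := fun _ => rfl
  rw [← (hup.iterate_right n) x.down, h]

theorem IsUniversalNQuandleQuotient.exists_lift {Q : Type u} {Qn : Type v} [Quandle Q]
    [Quandle Qn] {n : ℕ} {π : Q →◃ Qn} (hπ : IsUniversalNQuandleQuotient n π) {Y : Type u}
    [Quandle Y] (hY : IsNQuandle Y n) (f : Q →◃ Y) : ∃ g : Qn →◃ Y, ∀ x, g (π x) = f x := by
  obtain ⟨g, hg, -⟩ :=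
    hπ.2.2 (ULift.{v} Y) hY.ulift ⟨fun x => ⟨f x⟩, congrArg ULift.up f.map_act⟩
  exact ⟨⟨fun z => (g z).down, congrArg ULift.down g.map_act⟩,
    fun x => congrArg ULift.down (hg x)⟩

namespace Quandle

theorem dihedral_isInvolutory (n : ℕ) : Rack.IsInvolutory (Dihedral n) := dihedralAct.inv n

def dihedralThreeLift {Y : Type*} [Quandle Y] (hY : Rack.IsInvolutory Y) (a b : Y)
    (hab : a ◃ b ◃ a = b) : Dihedral 3 →◃ Y where
  -- `Dihedral 3` is `ZMod 3`, which is definitionally `Fin 3`.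
  toFun i := ![a, b, a ◃ b] i
  map_act' {i j} := by
    have hba : b ◃ a = a ◃ b := by rw [← hY a (b ◃ a), hab]
    have hbab : b ◃ a ◃ b = a := by rw [← hba, hY]
    have habA : (a ◃ b) ◃ a = b := by
      have h := (Shelf.self_distrib (x := a) (y := b) (z := a)).symm
      rwa [Quandle.fix, hab] at h
    have habB : (a ◃ b) ◃ b = a := by
      have h := (Shelf.self_distrib (x := b) (y := a) (z := b)).symm
      rwa [Quandle.fix, hbab, hba] at h
    change Fin 3 at i j
    fin_cases i <;> fin_cases j
    all_goals first
      | exact Quandle.fix.symm | exact (hY a b).symm | exact hba.symm | exact hbab.symm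
      | exact habA.symm | exact habB.symm | rfl

@[simp]
theorem dihedralThreeLift_zero {Y : Type*} [Quandle Y] (hY : Rack.IsInvolutory Y) (a b : Y)
    (hab : a ◃ b ◃ a = b) : dihedralThreeLift hY a b hab (0 : ZMod 3) = a := rfl

@[simp]
theorem dihedralThreeLift_one {Y : Type*} [Quandle Y] (hY : Rack.IsInvolutory Y) (a b : Y)
    (hab : a ◃ b ◃ a = b) : dihedralThreeLift hY a b hab (1 : ZMod 3) = b := rfl

theorem dihedralThree_hom_ext {Y : Type*} [Shelf Y] {f g : Dihedral 3 →◃ Y}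
    (h0 : f (0 : ZMod 3) = g (0 : ZMod 3)) (h1 : f (1 : ZMod 3) = g (1 : ZMod 3)) : f = g := by
  have h2 : f (2 : ZMod 3) = g (2 : ZMod 3) := by
    have hf : f (2 : ZMod 3) = f (0 : ZMod 3) ◃ f (1 : ZMod 3) :=
      f.map_act (x := (0 : ZMod 3)) (y := (1 : ZMod 3))
    have hg : g (2 : ZMod 3) = g (0 : ZMod 3) ◃ g (1 : ZMod 3) :=
      g.map_act (x := (0 : ZMod 3)) (y := (1 : ZMod 3))
    rw [hf, hg, h0, h1]
  refine DFunLike.ext f g fun i => ?_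
  change Fin 3 at i
  fin_cases i
  exacts [h0, h1, h2]

end Quandle

namespace DehnQuandle

variable {G : Type*} [Group G] {S : Set G}

@[simp]
theorem val_act (x y : DehnQuandle G S) : (x ◃ y).1 = x.1 * y.1 * x.1⁻¹ := rfl

@[simp]
theorem val_invAct (x y : DehnQuandle G S) : (x ◃⁻¹ y).1 = x.1⁻¹ * y.1 * x.1 := rfl

theorem hom_ext_of_closure_eq_top {R : Type*} [Rack R] {f g : DehnQuandle G S →◃ R}
    {T : Set (DehnQuandle G S)}
    (hT : Subgroup.closure ((fun x : DehnQuandle G S => x.1) '' T) = ⊤)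
    (hS : S ⊆ (fun x : DehnQuandle G S => x.1) '' T) (hfg : Set.EqOn f g T) : f = g := by
  refine DFunLike.ext f g fun x => ?_
  obtain ⟨s, hs, hsx⟩ := x.2
  obtain ⟨u, hu⟩ := isConj_iff.mp hsx
  obtain ⟨y, hyT, rfl⟩ := hS hs
  suffices ∀ u ∈ Subgroup.closure ((fun x : DehnQuandle G S => x.1) '' T),
      ∀ z : DehnQuandle G S, z.1 = u * y.1 * u⁻¹ → f z = g z from
    this u (hT ▸ Subgroup.mem_top u) x hu.symm
  intro u hu
  induction hu using Subgroup.closure_induction_left with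
  | one =>
    intro z hz
    rw [show z = y from Subtype.ext (by simpa using hz)]
    exact hfg hyT
  | mul_left a ha u _ ih =>
    obtain ⟨a, haT, rfl⟩ : ∃ a : DehnQuandle G S, a ∈ T ∧ a.1 = _ := ha
    intro z hz
    rw [← Rack.act_invAct_eq a z, f.map_act, g.map_act, hfg haT, ih _ (by simp [hz]; group)]
  | inv_mul_cancel a ha u _ ih =>
    obtain ⟨a, haT, rfl⟩ : ∃ a : DehnQuandle G S, a ∈ T ∧ a.1 = _ := ha
    intro z hz
    rw [← Rack.invAct_act_eq a z, f.map_invAct, g.map_invAct, hfg haT,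
      ih _ (by simp [hz]; group)]

end DehnQuandle

def bSL2Z : Matrix.SpecialLinearGroup (Fin 2) ℤ :=
  ⟨!![1, 0; -1, 1], by simp [Matrix.det_fin_two_of]⟩

theorem tSL2Z_mul_bSL2Z_mul_tSL2Z : tSL2Z * bSL2Z * tSL2Z = bSL2Z * tSL2Z * bSL2Z := by
  rw [Matrix.SpecialLinearGroup.ext_iff]
  simp only [Matrix.SpecialLinearGroup.coe_mul]
  simp [tSL2Z, bSL2Z]

theorem S_mul_tSL2Z_mul_bSL2Z_mul_tSL2Z : ModularGroup.S * (tSL2Z * bSL2Z * tSL2Z) = 1 := by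
  rw [Matrix.SpecialLinearGroup.ext_iff]
  simp only [Matrix.SpecialLinearGroup.coe_mul]
  simp [ModularGroup.coe_S, tSL2Z, bSL2Z, Fin.forall_fin_two]

theorem closure_tSL2Z_bSL2Z : Subgroup.closure {tSL2Z, bSL2Z} = ⊤ := by
  rw [eq_top_iff, ← SpecialLinearGroup.SL2Z_generators, Subgroup.closure_le,
    Set.insert_subset_iff, Set.singleton_subset_iff]
  have ht : tSL2Z ∈ Subgroup.closure {tSL2Z, bSL2Z} := Subgroup.subset_closure (by simp)
  have hb : bSL2Z ∈ Subgroup.closure {tSL2Z, bSL2Z} := Subgroup.subset_closure (by simp)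
  refine ⟨?_, ht⟩
  rw [eq_inv_of_mul_eq_one_left S_mul_tSL2Z_mul_bSL2Z_mul_tSL2Z]
  exact inv_mem (mul_mem (mul_mem ht hb) ht)

def reduceModTwo :
    Matrix.SpecialLinearGroup (Fin 2) ℤ →* Matrix.SpecialLinearGroup (Fin 2) (ZMod 2) :=
  Matrix.SpecialLinearGroup.map (Int.castRingHom (ZMod 2))

def tF2 : Matrix.SpecialLinearGroup (Fin 2) (ZMod 2) := ⟨!![1, 1; 0, 1], by decide⟩

def bF2 : Matrix.SpecialLinearGroup (Fin 2) (ZMod 2) := ⟨!![1, 0; 1, 1], by decide⟩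

theorem reduceModTwo_tSL2Z : reduceModTwo tSL2Z = tF2 := by
  decide

theorem reduceModTwo_bSL2Z : reduceModTwo bSL2Z = bF2 := by
  decide

/-- The conjugates of `tF2` are `tF2`, `bF2` and `tF2 * bF2 * tF2`, labelled `0`, `1`, `2`;
every other matrix also gets the junk label `2`. -/
def transvectionLabel (m : Matrix.SpecialLinearGroup (Fin 2) (ZMod 2)) : ZMod 3 :=
  if m = tF2 then 0 else if m = bF2 then 1 else 2

theorem transvectionLabel_conj_act (u v : Matrix.SpecialLinearGroup (Fin 2) (ZMod 2)) :
    transvectionLabel (u * tF2 * u⁻¹ * (v * tF2 * v⁻¹) * (u * tF2 * u⁻¹)⁻¹) =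
      Quandle.dihedralAct 3 (transvectionLabel (u * tF2 * u⁻¹))
        (transvectionLabel (v * tF2 * v⁻¹)) := by
  revert u v
  decide

abbrev TorusDehnQuandle : Type := DehnQuandle (Matrix.SpecialLinearGroup (Fin 2) ℤ) {tSL2Z}

namespace TorusDehnQuandle

def t : TorusDehnQuandle := ⟨tSL2Z, tSL2Z, rfl, IsConj.refl _⟩

def b : TorusDehnQuandle :=
  ⟨bSL2Z, tSL2Z, rfl, isConj_iff.mpr ⟨tSL2Z * bSL2Z, by
    rw [tSL2Z_mul_bSL2Z_mul_tSL2Z]; group⟩⟩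

theorem t_act_b_act_t : t ◃ b ◃ t = b := by
  apply Subtype.ext
  calc tSL2Z * (bSL2Z * tSL2Z * bSL2Z⁻¹) * tSL2Z⁻¹
      = tSL2Z * bSL2Z * tSL2Z * (tSL2Z * bSL2Z)⁻¹ := by group
    _ = bSL2Z * tSL2Z * bSL2Z * (tSL2Z * bSL2Z)⁻¹ := by rw [tSL2Z_mul_bSL2Z_mul_tSL2Z]
    _ = bSL2Z := by group

theorem closure_image_val_t_b :
    Subgroup.closure ((fun x : TorusDehnQuandle => x.1) '' {t, b}) = ⊤ := by
  rw [Set.image_pair]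
  exact closure_tSL2Z_bSL2Z

theorem exists_conj_eq_reduceModTwo (x : TorusDehnQuandle) :
    ∃ u, u * tF2 * u⁻¹ = reduceModTwo x.1 := by
  obtain ⟨s, rfl, hx⟩ := x.2
  rw [← reduceModTwo_tSL2Z]
  exact isConj_iff.mp (reduceModTwo.map_isConj hx)

def mod2Coloring : TorusDehnQuandle →◃ Quandle.Dihedral 3 where
  toFun x := transvectionLabel (reduceModTwo x.1)
  map_act' {x y} := by
    obtain ⟨u, hu⟩ := exists_conj_eq_reduceModTwo x
    obtain ⟨v, hv⟩ := exists_conj_eq_reduceModTwo y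
    simp only [DehnQuandle.val_act, map_mul, map_inv, ← hu, ← hv]
    exact transvectionLabel_conj_act u v

theorem mod2Coloring_t : mod2Coloring t = (0 : ZMod 3) := by
  show transvectionLabel (reduceModTwo tSL2Z) = 0
  rw [reduceModTwo_tSL2Z]
  decide

theorem mod2Coloring_b : mod2Coloring b = (1 : ZMod 3) := by
  show transvectionLabel (reduceModTwo bSL2Z) = 1
  rw [reduceModTwo_bSL2Z]
  decide

end TorusDehnQuandle

open TorusDehnQuandle

/-- the universal involutory (2-)quandle quotient of the quandle of
conjugates of `t` in `SL(2, ℤ)` is isomorphic to the dihedral quandle of order 3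
(`ZMod 3` with, in Mathlib's conventions, `a ◃ b = 2a - b`, i.e. the paper's
`i * j = 2j - i`). -/
theorem stmt_15 {Q2 : Type v} [Quandle Q2]
    (π : DehnQuandle (Matrix.SpecialLinearGroup (Fin 2) ℤ) {tSL2Z} →◃ Q2)
    (hπ : IsUniversalNQuandleQuotient 2 π) :
    ∃ e : Q2 ≃ Quandle.Dihedral 3, ∀ x y : Q2, e (x ◃ y) = e x ◃ e y := by
  obtain ⟨g, hg⟩ := hπ.exists_lift
    (Rack.isInvolutory_iff_isNQuandle_two.mp (Quandle.dihedral_isInvolutory 3)) mod2Coloring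
  let h := Quandle.dihedralThreeLift (Rack.isInvolutory_iff_isNQuandle_two.mpr hπ.2.1)
    (π t) (π b) (by rw [← π.map_act, ← π.map_act, t_act_b_act_t])
  have hπ_eq : h.comp mod2Coloring = π := by
    refine DehnQuandle.hom_ext_of_closure_eq_top closure_image_val_t_b ?_ ?_
    · exact Set.singleton_subset_iff.mpr ⟨t, Or.inl rfl, rfl⟩
    · rintro _ (rfl | rfl)
      · rw [ShelfHom.comp_apply, mod2Coloring_t, Quandle.dihedralThreeLift_zero]
      · rw [ShelfHom.comp_apply, mod2Coloring_b, Quandle.dihedralThreeLift_one]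
  have hgh : g.comp h = ShelfHom.id _ :=
    Quandle.dihedralThree_hom_ext ((hg t).trans mod2Coloring_t) ((hg b).trans mod2Coloring_b)
  refine ⟨⟨g, h, fun z => ?_, fun i => DFunLike.congr_fun hgh i⟩, fun x y => g.map_act⟩
  obtain ⟨x, rfl⟩ := hπ.1 z
  rw [hg, ← ShelfHom.comp_apply, hπ_eq]
end
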